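/- arXiv:2603.25584 — 5 statements merged into one kernel-verified Lean document; each statement's English description precedes it below -/
import Mathlib

section
/- Let q ∈ (1,∞], let q̄ be its conjugate exponent, and let α : (0,1) → [0,∞) be a nonnegative, nondecreasing function of integral one with α ∈ L^q(0,1). Then for every probability measure μ on ℝ with finite q̄-th moment, the spectral risk measure satisfies the variational formula R_α(μ) = max over τ ∈ Γ(α_#Leb_(0,1), μ) of ∫_{ℝ×ℝ} ω·z dτ(ω,z), where the maximum is over all couplings of the pushforward α_#Leb_(0,1) and μ; in particular the maximum is attained. -/
open MeasureTheory Set Filter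
open scoped ENNReal NNReal Topology

noncomputable section

/-- Quantile function (generalized inverse cdf) of a measure on ℝ. -/
def quantile (μ : Measure ℝ) (t : ℝ) : ℝ :=
  sInf {x : ℝ | ENNReal.ofReal t ≤ μ (Set.Iic x)}

/-- Spectral risk measure `R_α(μ) = ∫_0^1 F_μ⁻¹(t) α(t) dt`. -/
def specRisk (α : ℝ → ℝ) (μ : Measure ℝ) : ℝ :=
  ∫ t in Set.Ioo (0:ℝ) 1, quantile μ t * α t

/-- `π` is a coupling of `μ` and `ν`. -/
def IsCoupling {X Y : Type*} [MeasurableSpace X] [MeasurableSpace Y]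
    (π : Measure (X × Y)) (μ : Measure X) (ν : Measure Y) : Prop :=
  π.map Prod.fst = μ ∧ π.map Prod.snd = ν

/-- `p`-Wasserstein distance between two (equal-mass) measures. -/
def Wp {X : Type*} [MeasurableSpace X] [PseudoEMetricSpace X] (p : ℝ)
    (μ ν : Measure X) : ℝ :=
  ((⨅ π : {π : Measure (X × X) // IsCoupling π μ ν},
      ∫⁻ z, edist z.1 z.2 ^ p ∂π.1) ^ (1 / p)).toReal

/-- Finite `p`-th moment. -/
def FiniteMomentp {X : Type*} [MeasurableSpace X] [PseudoMetricSpace X] (p : ℝ)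
    (μ : Measure X) : Prop :=
  ∃ x₀ : X, Integrable (fun x => dist x x₀ ^ p) μ





namespace SRP

variable (μ : Measure ℝ) [IsProbabilityMeasure μ]

lemma qS_nonempty {t : ℝ} (ht1 : t < 1) :
    {x : ℝ | ENNReal.ofReal t ≤ μ (Set.Iic x)}.Nonempty := by
  have h1 : ENNReal.ofReal t < 1 := ENNReal.ofReal_lt_one.2 ht1
  have h := tendsto_measure_Iic_atTop (μ := μ)
  rw [measure_univ] at h
  obtain ⟨x, hx⟩ := (h.eventually (eventually_ge_nhds h1)).exists
  exact ⟨x, hx⟩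

lemma qS_bddBelow {t : ℝ} (ht : 0 < t) :
    BddBelow {x : ℝ | ENNReal.ofReal t ≤ μ (Set.Iic x)} := by
  have h0 : (0 : ℝ≥0∞) < ENNReal.ofReal t := ENNReal.ofReal_pos.2 ht
  obtain ⟨n, hn⟩ : ∃ n : ℕ, μ (Set.Iic (-(n : ℝ))) < ENNReal.ofReal t := by
    have hseq : Tendsto (fun n : ℕ => μ (Set.Iic (-(n : ℝ)))) atTop
        (𝓝 (μ (⋂ n : ℕ, Set.Iic (-(n : ℝ))))) := by
      have := tendsto_measure_iInter_atTop (μ := μ) (s := fun n : ℕ => Set.Iic (-(n : ℝ)))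
        (fun n => nullMeasurableSet_Iic)
        (fun m n hmn => Iic_subset_Iic.2 (by exact_mod_cast neg_le_neg (Nat.cast_le.2 hmn)))
        ⟨0, measure_ne_top μ _⟩
      exact this
    have hempty : (⋂ n : ℕ, Set.Iic (-(n : ℝ))) = ∅ := by
      ext x
      simp only [mem_iInter, mem_Iic, mem_empty_iff_false, iff_false]
      push_neg
      obtain ⟨n, hn⟩ := exists_nat_gt (-x)
      exact ⟨n, by linarith⟩
    rw [hempty, measure_empty] at hseq
    exact (hseq.eventually (eventually_lt_nhds h0)).exists
  refine ⟨-(n : ℝ), fun x hx => ?_⟩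
  by_contra h
  push_neg at h
  exact absurd (le_trans hx (measure_mono (Iic_subset_Iic.2 h.le))) hn.not_ge

lemma quantile_mem_S {t : ℝ} (ht : 0 < t) (ht1 : t < 1) :
    ENNReal.ofReal t ≤ μ (Set.Iic (quantile μ t)) := by
  set S := {x : ℝ | ENNReal.ofReal t ≤ μ (Set.Iic x)} with hS
  have hne : S.Nonempty := qS_nonempty μ ht1
  have hbdd : BddBelow S := qS_bddBelow μ ht
  have hin : ∀ n : ℕ, ENNReal.ofReal t ≤ μ (Set.Iic (quantile μ t + 1 / (n + 1))) := by
    intro n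
    have hp : (0 : ℝ) < 1 / (n + 1) := by positivity
    have hlt : sInf S < sInf S + 1 / (n + 1) := by linarith
    obtain ⟨y, hyS, hy⟩ := (csInf_lt_iff hbdd hne).1 hlt
    exact le_trans hyS (measure_mono (Iic_subset_Iic.2 hy.le))
  have hiic : Set.Iic (quantile μ t) = ⋂ n : ℕ, Set.Iic (quantile μ t + 1 / (n + 1)) := by
    ext x
    simp only [mem_Iic, mem_iInter]
    constructor
    · intro h n
      have hp : (0 : ℝ) < 1 / (n + 1) := by positivity
      linarith
    · intro h
      by_contra hc
      push_neg at hc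
      obtain ⟨n, hn⟩ := exists_nat_one_div_lt (show (0:ℝ) < x - quantile μ t by linarith)
      have := h n
      linarith
  have htend : Tendsto (fun n : ℕ => μ (Set.Iic (quantile μ t + 1 / (n + 1)))) atTop
      (𝓝 (μ (Set.Iic (quantile μ t)))) := by
    rw [hiic]
    exact tendsto_measure_iInter_atTop (fun n => nullMeasurableSet_Iic)
      (fun m n hmn => Iic_subset_Iic.2 (by
        have h1 : (1 : ℝ) / (n + 1) ≤ 1 / (m + 1) := by
          apply one_div_le_one_div_of_le (by positivity)
          exact_mod_cast add_le_add_left (Nat.cast_le.2 hmn) 1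
        linarith)) ⟨0, measure_ne_top μ _⟩
  exact ge_of_tendsto htend (Eventually.of_forall hin)

lemma quantile_le_iff {t x : ℝ} (ht : 0 < t) (ht1 : t < 1) :
    quantile μ t ≤ x ↔ ENNReal.ofReal t ≤ μ (Set.Iic x) := by
  constructor
  · intro h
    exact (quantile_mem_S μ ht ht1).trans (measure_mono (Iic_subset_Iic.2 h))
  · intro h
    exact csInf_le (qS_bddBelow μ ht) h

lemma quantile_monoOn : MonotoneOn (quantile μ) (Set.Ioo (0:ℝ) 1) := by
  intro u hu v hv huv
  exact csInf_le_csInf (qS_bddBelow μ hu.1) (qS_nonempty μ hv.2)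
    (fun x hx => le_trans (ENNReal.ofReal_le_ofReal huv) hx)

lemma quantile_aemeasurable :
    AEMeasurable (quantile μ) (volume.restrict (Set.Ioo (0:ℝ) 1)) :=
  aemeasurable_restrict_of_monotoneOn measurableSet_Ioo (quantile_monoOn μ)

lemma map_quantile : (volume.restrict (Set.Ioo (0:ℝ) 1)).map (quantile μ) = μ := by
  have hqm := quantile_aemeasurable μ
  haveI : IsProbabilityMeasure (volume.restrict (Set.Ioo (0:ℝ) 1)) := by
    constructor
    rw [Measure.restrict_apply_univ, Real.volume_Ioo]
    norm_num
  haveI : IsProbabilityMeasure ((volume.restrict (Set.Ioo (0:ℝ) 1)).map (quantile μ)) :=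
    Measure.isProbabilityMeasure_map hqm
  refine Measure.ext_of_Iic _ _ (fun x => ?_)
  rw [Measure.map_apply_of_aemeasurable hqm measurableSet_Iic,
    Measure.restrict_apply' measurableSet_Ioo]
  set F := (μ (Set.Iic x)).toReal with hF
  have hFle : F ≤ 1 := by
    rw [hF]
    exact ENNReal.toReal_le_of_le_ofReal one_pos.le (by simpa using prob_le_one)
  have hF0 : 0 ≤ F := ENNReal.toReal_nonneg
  have hset : quantile μ ⁻¹' Set.Iic x ∩ Set.Ioo (0:ℝ) 1
      = Set.Iic F ∩ Set.Ioo (0:ℝ) 1 := by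
    ext u
    simp only [mem_inter_iff, mem_preimage, mem_Iic, and_congr_left_iff]
    intro hu
    rw [quantile_le_iff μ hu.1 hu.2,
      show ENNReal.ofReal u ≤ μ (Set.Iic x) ↔ u ≤ F from ?_]
    rw [hF, ENNReal.ofReal_le_iff_le_toReal (measure_ne_top μ _)]
  have hsub1 : Set.Ioo (0:ℝ) F ⊆ Set.Iic F ∩ Set.Ioo (0:ℝ) 1 := by
    intro u hu
    exact ⟨hu.2.le, hu.1, lt_of_lt_of_le hu.2 hFle⟩
  have hsub2 : Set.Iic F ∩ Set.Ioo (0:ℝ) 1 ⊆ Set.Ioc (0:ℝ) F := by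
    intro u hu
    exact ⟨hu.2.1, hu.1⟩
  have h1 : volume (Set.Ioo (0:ℝ) F) = ENNReal.ofReal F := by
    rw [Real.volume_Ioo]; simp
  have h2 : volume (Set.Ioc (0:ℝ) F) = ENNReal.ofReal F := by
    rw [Real.volume_Ioc]; simp
  rw [hset]
  have key : volume (Set.Iic F ∩ Set.Ioo (0:ℝ) 1) = ENNReal.ofReal F := by
    refine le_antisymm ((measure_mono hsub2).trans_eq h2) ?_
    rw [← h1]
    exact measure_mono hsub1
  rw [key, hF, ENNReal.ofReal_toReal (measure_ne_top μ _)]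

end SRP




namespace SRP

/-- `Hf a s = 1_{s < a} - 1_{s < 0}`. -/
def Hf (a s : ℝ) : ℝ := (Set.Ioi s).indicator 1 a - (Set.Iio (0:ℝ)).indicator 1 s

lemma Hf_of_nonneg {a : ℝ} (ha : 0 ≤ a) (s : ℝ) :
    Hf a s = (Set.Ico (0:ℝ) a).indicator 1 s := by
  simp only [Hf, indicator_apply, mem_Ioi, mem_Iio, mem_Ico, Pi.one_apply]
  split_ifs <;> simp_all <;> linarith

lemma Hf_of_neg {a : ℝ} (ha : a < 0) (s : ℝ) :
    Hf a s = -((Set.Ico a 0).indicator 1 s) := by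
  simp only [Hf, indicator_apply, mem_Ioi, mem_Iio, mem_Ico, Pi.one_apply]
  split_ifs <;> simp_all <;> linarith

lemma abs_Hf_of_nonneg {a : ℝ} (ha : 0 ≤ a) (s : ℝ) :
    |Hf a s| = (Set.Ico (0:ℝ) a).indicator 1 s := by
  rw [Hf_of_nonneg ha]
  simp only [indicator_apply, Pi.one_apply]
  split_ifs <;> simp

lemma abs_Hf_of_neg {a : ℝ} (ha : a < 0) (s : ℝ) :
    |Hf a s| = (Set.Ico a (0:ℝ)).indicator 1 s := by
  rw [Hf_of_neg ha]
  simp only [indicator_apply, Pi.one_apply]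
  split_ifs <;> simp

lemma integrable_Hf (a : ℝ) : Integrable (fun s => Hf a s) volume := by
  rcases le_or_gt 0 a with ha | ha
  · simp only [Hf_of_nonneg ha]
    exact (integrable_indicator_iff measurableSet_Ico).2
      (integrableOn_const measure_Ico_lt_top.ne)
  · simp only [Hf_of_neg ha]
    exact ((integrable_indicator_iff measurableSet_Ico).2
      (integrableOn_const measure_Ico_lt_top.ne)).neg

lemma integral_Hf (a : ℝ) : ∫ s, Hf a s = a := by
  rcases le_or_gt 0 a with ha | ha
  · simp only [Hf_of_nonneg ha]
    rw [integral_indicator_one measurableSet_Ico, measureReal_def, Real.volume_Ico,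
      ENNReal.toReal_ofReal (by linarith)]
    ring
  · simp only [Hf_of_neg ha]
    rw [integral_neg, integral_indicator_one measurableSet_Ico, measureReal_def, Real.volume_Ico,
      ENNReal.toReal_ofReal (by linarith)]
    ring

lemma integral_abs_Hf (a : ℝ) : ∫ s, |Hf a s| = |a| := by
  rcases le_or_gt 0 a with ha | ha
  · simp only [abs_Hf_of_nonneg ha]
    rw [integral_indicator_one measurableSet_Ico, measureReal_def, Real.volume_Ico,
      ENNReal.toReal_ofReal (by linarith), abs_of_nonneg ha]
    ring
  · simp only [abs_Hf_of_neg ha]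
    rw [integral_indicator_one measurableSet_Ico, measureReal_def, Real.volume_Ico,
      ENNReal.toReal_ofReal (by linarith), abs_of_neg ha]
    ring

lemma measurable_Hf : Measurable (fun p : ℝ × ℝ => Hf p.1 p.2) := by
  have h1 : Measurable (fun p : ℝ × ℝ => ({q : ℝ × ℝ | q.2 < q.1}.indicator 1 p : ℝ)) :=
    measurable_const.indicator (measurableSet_lt measurable_snd measurable_fst)
  have h2 : Measurable (fun p : ℝ × ℝ => ({q : ℝ × ℝ | q.2 < 0}.indicator 1 p : ℝ)) :=
    measurable_const.indicator (measurableSet_lt measurable_snd measurable_const)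
  have heq : (fun p : ℝ × ℝ => Hf p.1 p.2) = fun p =>
      ({q : ℝ × ℝ | q.2 < q.1}.indicator 1 p : ℝ) - ({q : ℝ × ℝ | q.2 < 0}.indicator 1 p : ℝ) := by
    funext p
    simp only [Hf, indicator_apply, mem_Ioi, mem_Iio, mem_setOf_eq, Pi.one_apply]
  rw [heq]
  exact h1.sub h2

end SRP

/- KEXP part, to be appended after hf -/
namespace SRP

/-- Kernel value: `K_κ(s,t) = ∫ H(x,s) H(y,t) dκ(x,y)`. -/
def Kval (κ : Measure (ℝ × ℝ)) (p : ℝ × ℝ) : ℝ :=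
  ∫ z : ℝ × ℝ, Hf z.1 p.1 * Hf z.2 p.2 ∂κ

lemma key_expand (ξ ν : Measure ℝ) [IsProbabilityMeasure ξ] [IsProbabilityMeasure ν]
    (κ : Measure (ℝ × ℝ)) (hκ1 : κ.map Prod.fst = ξ) (hκ2 : κ.map Prod.snd = ν)
    (hint : Integrable (fun z : ℝ × ℝ => z.1 * z.2) κ) :
    (∫ z : ℝ × ℝ, z.1 * z.2 ∂κ = ∫ p, Kval κ p ∂(volume.prod volume)) ∧
    Integrable (Kval κ) (volume.prod volume) ∧
    ∀ p : ℝ × ℝ, Kval κ p = (κ (Set.Ioi p.1 ×ˢ Set.Ioi p.2)).toReal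
      - (Set.Iio (0:ℝ)).indicator 1 p.2 * (ξ (Set.Ioi p.1)).toReal
      - (Set.Iio (0:ℝ)).indicator 1 p.1 * (ν (Set.Ioi p.2)).toReal
      + (Set.Iio (0:ℝ)).indicator 1 p.1 * ((Set.Iio (0:ℝ)).indicator 1 p.2) := by
  haveI hprob : IsProbabilityMeasure κ := by
    constructor
    have h := congrArg (fun m : Measure ℝ => m Set.univ) hκ1
    simpa [Measure.map_apply measurable_fst MeasurableSet.univ] using h
  -- joint measurability
  have hG : Measurable (fun w : (ℝ × ℝ) × (ℝ × ℝ) => Hf w.1.1 w.2.1 * Hf w.1.2 w.2.2) := by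
    have m1 : Measurable (fun w : (ℝ × ℝ) × (ℝ × ℝ) => Hf w.1.1 w.2.1) :=
      measurable_Hf.comp (measurable_fst.fst.prodMk measurable_snd.fst)
    have m2 : Measurable (fun w : (ℝ × ℝ) × (ℝ × ℝ) => Hf w.1.2 w.2.2) :=
      measurable_Hf.comp (measurable_fst.snd.prodMk measurable_snd.snd)
    exact m1.mul m2
  -- Integrability on the product
  have hGint : Integrable (fun w : (ℝ × ℝ) × (ℝ × ℝ) => Hf w.1.1 w.2.1 * Hf w.1.2 w.2.2)
      (κ.prod (volume.prod volume)) := by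
    refine (integrable_prod_iff hG.aestronglyMeasurable).2 ⟨?_, ?_⟩
    · refine Eventually.of_forall (fun z => ?_)
      exact (integrable_Hf z.1).mul_prod (integrable_Hf z.2)
    · have hnorm : (fun z : ℝ × ℝ => ∫ p : ℝ × ℝ, ‖Hf z.1 p.1 * Hf z.2 p.2‖ ∂(volume.prod volume))
          = fun z : ℝ × ℝ => |z.1 * z.2| := by
        funext z
        have : ∀ p : ℝ × ℝ, ‖Hf z.1 p.1 * Hf z.2 p.2‖ = |Hf z.1 p.1| * |Hf z.2 p.2| := by
          intro p; rw [Real.norm_eq_abs, abs_mul]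
        simp only [this]
        rw [integral_prod_mul (fun s => |Hf z.1 s|) (fun t => |Hf z.2 t|),
          integral_abs_Hf, integral_abs_Hf, abs_mul]
      rw [hnorm]
      exact hint.abs
  -- Fubini
  have hswap : ∫ z : ℝ × ℝ, z.1 * z.2 ∂κ = ∫ p, Kval κ p ∂(volume.prod volume) := by
    have h1 : ∫ z : ℝ × ℝ, z.1 * z.2 ∂κ
        = ∫ z : ℝ × ℝ, (∫ p : ℝ × ℝ, Hf z.1 p.1 * Hf z.2 p.2 ∂(volume.prod volume)) ∂κ := by
      refine integral_congr_ae (Eventually.of_forall (fun z => ?_))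
      have hz := integral_prod_mul (μ := (volume : Measure ℝ)) (ν := (volume : Measure ℝ))
        (fun s => Hf z.1 s) (fun t => Hf z.2 t)
      simpa [integral_Hf] using hz.symm
    rw [h1]
    exact integral_integral_swap hGint
  refine ⟨hswap, ?_, ?_⟩
  · have := hGint.swap.integral_prod_left
    exact this
  · rintro ⟨s, t⟩
    set c : ℝ := (Set.Iio (0:ℝ)).indicator 1 s with hc
    set d : ℝ := (Set.Iio (0:ℝ)).indicator 1 t with hd
    have hexp : ∀ z : ℝ × ℝ, Hf z.1 s * Hf z.2 t
        = (Set.Ioi s ×ˢ Set.Ioi t).indicator 1 z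
          - d * ((Set.Ioi s ×ˢ (Set.univ : Set ℝ)).indicator 1 z)
          - c * (((Set.univ : Set ℝ) ×ˢ Set.Ioi t).indicator 1 z)
          + c * d := by
      intro z
      by_cases h1 : z.1 ∈ Set.Ioi s <;> by_cases h2 : z.2 ∈ Set.Ioi t <;>
        simp [Hf, indicator_apply, h1, h2, Set.mem_prod, hc, hd] <;> split_ifs <;> ring
    have i1 : Integrable ((Set.Ioi s ×ˢ Set.Ioi t).indicator (1 : ℝ × ℝ → ℝ)) κ :=
      (integrable_indicator_iff (measurableSet_Ioi.prod measurableSet_Ioi)).2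
        (integrableOn_const (measure_ne_top _ _))
    have i2 : Integrable ((Set.Ioi s ×ˢ (Set.univ : Set ℝ)).indicator (1 : ℝ × ℝ → ℝ)) κ :=
      (integrable_indicator_iff (measurableSet_Ioi.prod MeasurableSet.univ)).2
        (integrableOn_const (measure_ne_top _ _))
    have i3 : Integrable (((Set.univ : Set ℝ) ×ˢ Set.Ioi t).indicator (1 : ℝ × ℝ → ℝ)) κ :=
      (integrable_indicator_iff (MeasurableSet.univ.prod measurableSet_Ioi)).2
        (integrableOn_const (measure_ne_top _ _))
    have hK : Kval κ (s, t) = ∫ z : ℝ × ℝ,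
        ((Set.Ioi s ×ˢ Set.Ioi t).indicator 1 z
          - d * ((Set.Ioi s ×ˢ (Set.univ : Set ℝ)).indicator 1 z)
          - c * (((Set.univ : Set ℝ) ×ˢ Set.Ioi t).indicator 1 z)
          + c * d) ∂κ := by
      unfold Kval
      exact integral_congr_ae (Eventually.of_forall hexp)
    have hmf : κ (Set.Ioi s ×ˢ (Set.univ : Set ℝ)) = ξ (Set.Ioi s) := by
      rw [← hκ1, Measure.map_apply measurable_fst measurableSet_Ioi, ← Set.prod_univ]
    have hms : κ ((Set.univ : Set ℝ) ×ˢ Set.Ioi t) = ν (Set.Ioi t) := by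
      rw [← hκ2, Measure.map_apply measurable_snd measurableSet_Ioi, ← Set.univ_prod]
    have i12 : Integrable (fun z : ℝ × ℝ => (Set.Ioi s ×ˢ Set.Ioi t).indicator 1 z
        - d * (Set.Ioi s ×ˢ (Set.univ : Set ℝ)).indicator 1 z) κ := i1.sub (i2.const_mul d)
    have i123 : Integrable (fun z : ℝ × ℝ => (Set.Ioi s ×ˢ Set.Ioi t).indicator 1 z
        - d * (Set.Ioi s ×ˢ (Set.univ : Set ℝ)).indicator 1 z
        - c * ((Set.univ : Set ℝ) ×ˢ Set.Ioi t).indicator 1 z) κ := i12.sub (i3.const_mul c)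
    rw [hK, integral_add i123 (integrable_const (c * d)),
      integral_sub i12 (i3.const_mul c),
      integral_sub i1 (i2.const_mul d),
      integral_const_mul, integral_const_mul,
      integral_indicator_one (measurableSet_Ioi.prod measurableSet_Ioi),
      integral_indicator_one (measurableSet_Ioi.prod MeasurableSet.univ),
      integral_indicator_one (MeasurableSet.univ.prod measurableSet_Ioi),
      integral_const, measureReal_def, measureReal_def, measureReal_def, measureReal_def, hmf, hms, measure_univ, ENNReal.toReal_one, one_smul]

end SRP

theorem stmt_0 (q qb : ℝ≥0∞) (hq : 1 < q) (hconj : 1 / q + 1 / qb = 1)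
    (α : ℝ → ℝ)
    (hα_nonneg : ∀ t ∈ Set.Ioo (0:ℝ) 1, 0 ≤ α t)
    (hα_mono : MonotoneOn α (Set.Ioo (0:ℝ) 1))
    (hα_meas : AEMeasurable α (volume.restrict (Set.Ioo (0:ℝ) 1)))
    (hα_int : ∫ t in Set.Ioo (0:ℝ) 1, α t = 1)
    (hα_Lq : MemLp α q (volume.restrict (Set.Ioo (0:ℝ) 1)))
    (μ : Measure ℝ) [IsProbabilityMeasure μ]
    (hμ : MemLp id qb μ) :
    IsGreatest
      {r : ℝ | ∃ τ : Measure (ℝ × ℝ),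
          IsCoupling τ ((volume.restrict (Set.Ioo (0:ℝ) 1)).map α) μ ∧
          r = ∫ z, z.1 * z.2 ∂τ}
      (specRisk α μ) := by
  set ρ := volume.restrict (Set.Ioo (0:ℝ) 1) with hρ
  haveI hρprob : IsProbabilityMeasure ρ := by
    constructor
    rw [hρ, Measure.restrict_apply_univ, Real.volume_Ioo]
    norm_num
  set ξ := ρ.map α with hξ
  haveI : IsProbabilityMeasure ξ := Measure.isProbabilityMeasure_map hα_meas
  set R := quantile μ with hR
  have hRmono : MonotoneOn R (Set.Ioo (0:ℝ) 1) := SRP.quantile_monoOn μ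
  have hRmeas : AEMeasurable R ρ := SRP.quantile_aemeasurable μ
  have hmapR : ρ.map R = μ := SRP.map_quantile μ
  have hpair : AEMeasurable (fun u => (α u, R u)) ρ := hα_meas.prodMk hRmeas
  set τ₀ := ρ.map (fun u => (α u, R u)) with hτ₀
  have hτ₀c : IsCoupling τ₀ ξ μ := by
    constructor
    · rw [hτ₀, AEMeasurable.map_map_of_aemeasurable measurable_fst.aemeasurable hpair]
      rfl
    · rw [hτ₀, AEMeasurable.map_map_of_aemeasurable measurable_snd.aemeasurable hpair]
      exact hmapR
  have hconj' : (1:ℝ≥0∞) / 1 = 1 / q + 1 / qb := by rw [hconj]; simp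
  have hmemfst : ∀ κ : Measure (ℝ × ℝ), κ.map Prod.fst = ξ →
      MemLp (fun z : ℝ × ℝ => z.1) q κ := by
    intro κ hκ
    have h1 : MemLp id q ξ := by
      rw [hξ]
      exact (memLp_map_measure_iff aestronglyMeasurable_id hα_meas).2 hα_Lq
    have h2 : MemLp id q (κ.map Prod.fst) := by rw [hκ]; exact h1
    exact (memLp_map_measure_iff aestronglyMeasurable_id measurable_fst.aemeasurable).1 h2
  have hmemsnd : ∀ κ : Measure (ℝ × ℝ), κ.map Prod.snd = μ →
      MemLp (fun z : ℝ × ℝ => z.2) qb κ := by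
    intro κ hκ
    have h2 : MemLp id qb (κ.map Prod.snd) := by rw [hκ]; exact hμ
    exact (memLp_map_measure_iff aestronglyMeasurable_id measurable_snd.aemeasurable).1 h2
  have hold : ∀ κ : Measure (ℝ × ℝ), IsCoupling κ ξ μ →
      Integrable (fun z : ℝ × ℝ => z.1 * z.2) κ := by
    intro κ hκ
    haveI : ENNReal.HolderTriple q qb 1 := ⟨by simpa [one_div] using hconj'.symm⟩
    have h := ((hmemsnd κ hκ.2).smul (r := 1) (hmemfst κ hκ.1))
    rw [memLp_one_iff_integrable] at h
    exact h
  have hval : ∫ z : ℝ × ℝ, z.1 * z.2 ∂τ₀ = specRisk α μ := by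
    rw [hτ₀, integral_map hpair (f := fun z : ℝ × ℝ => z.1 * z.2) (measurable_fst.mul measurable_snd).aestronglyMeasurable]
    refine integral_congr_ae (Eventually.of_forall fun u => ?_)
    exact mul_comm _ _
  have hξv : ∀ s : ℝ, ξ (Set.Ioi s) = volume (α ⁻¹' Set.Ioi s ∩ Set.Ioo (0:ℝ) 1) := by
    intro s
    rw [hξ, Measure.map_apply_of_aemeasurable hα_meas measurableSet_Ioi, hρ,
      Measure.restrict_apply' measurableSet_Ioo]
  have hμv : ∀ t : ℝ, μ (Set.Ioi t) = volume (R ⁻¹' Set.Ioi t ∩ Set.Ioo (0:ℝ) 1) := by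
    intro t
    rw [← hmapR, Measure.map_apply_of_aemeasurable hRmeas measurableSet_Ioi, hρ,
      Measure.restrict_apply' measurableSet_Ioo]
  have hτ₀rect : ∀ s t : ℝ,
      τ₀ (Set.Ioi s ×ˢ Set.Ioi t) = min (ξ (Set.Ioi s)) (μ (Set.Ioi t)) := by
    intro s t
    have hnest : (α ⁻¹' Set.Ioi s ∩ Set.Ioo (0:ℝ) 1 ⊆ R ⁻¹' Set.Ioi t ∩ Set.Ioo (0:ℝ) 1) ∨
        (R ⁻¹' Set.Ioi t ∩ Set.Ioo (0:ℝ) 1 ⊆ α ⁻¹' Set.Ioi s ∩ Set.Ioo (0:ℝ) 1) := by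
      by_contra hcon
      push_neg at hcon
      obtain ⟨h1, h2⟩ := hcon
      obtain ⟨u, hu, hun⟩ := not_subset.1 h1
      obtain ⟨v, hv, hvn⟩ := not_subset.1 h2
      rcases le_total u v with huv | huv
      · refine hvn ⟨Set.mem_preimage.2 (Set.mem_Ioi.2 ?_), hv.2⟩
        exact lt_of_lt_of_le (Set.mem_Ioi.1 (Set.mem_preimage.1 hu.1))
          (hα_mono hu.2 hv.2 huv)
      · refine hun ⟨Set.mem_preimage.2 (Set.mem_Ioi.2 ?_), hu.2⟩
        exact lt_of_lt_of_le (Set.mem_Ioi.1 (Set.mem_preimage.1 hv.1))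
          (hRmono hv.2 hu.2 huv)
    have hpre : (fun u => (α u, R u)) ⁻¹' (Set.Ioi s ×ˢ Set.Ioi t)
        = α ⁻¹' Set.Ioi s ∩ R ⁻¹' Set.Ioi t := by
      ext u
      simp [Set.mem_prod]
    rw [hτ₀, Measure.map_apply_of_aemeasurable hpair (measurableSet_Ioi.prod measurableSet_Ioi),
      hpre, hρ, Measure.restrict_apply' measurableSet_Ioo]
    rcases hnest with h | h
    · have hint : α ⁻¹' Set.Ioi s ∩ R ⁻¹' Set.Ioi t ∩ Set.Ioo (0:ℝ) 1
          = α ⁻¹' Set.Ioi s ∩ Set.Ioo (0:ℝ) 1 := by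
        apply subset_antisymm
        · exact fun u hu => ⟨hu.1.1, hu.2⟩
        · exact fun u hu => ⟨⟨hu.1, (h hu).1⟩, hu.2⟩
      rw [hint, hξv s, hμv t]
      exact (min_eq_left (measure_mono h)).symm
    · have hint : α ⁻¹' Set.Ioi s ∩ R ⁻¹' Set.Ioi t ∩ Set.Ioo (0:ℝ) 1
          = R ⁻¹' Set.Ioi t ∩ Set.Ioo (0:ℝ) 1 := by
        apply subset_antisymm
        · exact fun u hu => ⟨hu.1.2, hu.2⟩
        · exact fun u hu => ⟨⟨(h hu).1, hu.1⟩, hu.2⟩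
      rw [hint, hξv s, hμv t]
      exact (min_eq_right (measure_mono h)).symm
  have hfrechet : ∀ κ : Measure (ℝ × ℝ), IsCoupling κ ξ μ → ∀ s t : ℝ,
      κ (Set.Ioi s ×ˢ Set.Ioi t) ≤ min (ξ (Set.Ioi s)) (μ (Set.Ioi t)) := by
    intro κ hκ s t
    refine le_min ?_ ?_
    · calc κ (Set.Ioi s ×ˢ Set.Ioi t) ≤ κ (Set.Ioi s ×ˢ (Set.univ : Set ℝ)) :=
          measure_mono (Set.prod_mono_right (Set.subset_univ _))
        _ = ξ (Set.Ioi s) := by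
          rw [← hκ.1, Measure.map_apply measurable_fst measurableSet_Ioi, ← Set.prod_univ]
    · calc κ (Set.Ioi s ×ˢ Set.Ioi t) ≤ κ ((Set.univ : Set ℝ) ×ˢ Set.Ioi t) :=
          measure_mono (Set.prod_mono_left (Set.subset_univ _))
        _ = μ (Set.Ioi t) := by
          rw [← hκ.2, Measure.map_apply measurable_snd measurableSet_Ioi, ← Set.univ_prod]
  constructor
  · exact ⟨τ₀, hτ₀c, hval.symm⟩
  · rintro r ⟨τ, hτc, rfl⟩
    obtain ⟨e1, e2, e3⟩ := SRP.key_expand ξ μ τ hτc.1 hτc.2 (hold τ hτc)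
    obtain ⟨f1, f2, f3⟩ := SRP.key_expand ξ μ τ₀ hτ₀c.1 hτ₀c.2 (hold τ₀ hτ₀c)
    rw [e1, ← hval, f1]
    refine integral_mono e2 f2 (fun p => ?_)
    rw [e3 p, f3 p]
    have hle : (τ (Set.Ioi p.1 ×ˢ Set.Ioi p.2)).toReal
        ≤ (τ₀ (Set.Ioi p.1 ×ˢ Set.Ioi p.2)).toReal := by
      haveI : IsProbabilityMeasure τ₀ := by
        constructor
        have h := congrArg (fun m : Measure ℝ => m Set.univ) hτ₀c.1
        simpa [Measure.map_apply measurable_fst MeasurableSet.univ] using h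
      apply ENNReal.toReal_mono (measure_ne_top τ₀ _)
      rw [hτ₀rect p.1 p.2]
      exact hfrechet τ hτc p.1 p.2
    exact add_le_add_left (sub_le_sub_right (sub_le_sub_right hle _) _) _

end
end

section
/- Let 𝑿 ⊆ ℝ^n, let c : 𝑿 → ℝ be β-Hölder with constant C_H for some β ∈ (0,1], and let r ≥ 1 satisfy βr ≤ p for some p ∈ [1,∞). Then for any two probability measures γ, γ̃ on 𝑿 with finite p-th moment, W_r(c_#γ, c_#γ̃) ≤ C_H · W_p(γ, γ̃)^β. -/
open MeasureTheory Set Filter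
open scoped ENNReal NNReal Topology

noncomputable section

/-- Jensen / power-mean inequality for probability measures. -/
lemma my_jensen {α : Type*} [MeasurableSpace α] (μ : Measure α)
    [IsProbabilityMeasure μ] {g : α → ℝ≥0∞} (hg : AEMeasurable g μ) {q p : ℝ}
    (hq : 0 < q) (hqp : q ≤ p) :
    ∫⁻ a, g a ^ q ∂μ ≤ (∫⁻ a, g a ^ p ∂μ) ^ (q / p) := by
  rcases eq_or_lt_of_le hqp with h | h
  · subst h
    rw [div_self hq.ne', ENNReal.rpow_one]
  · have hp : 0 < p := hq.trans h
    have hs : 1 < p / q := (one_lt_div hq).2 h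
    have hconj : (p / q).HolderConjugate _ := Real.HolderConjugate.conjExponent hs
    have key := ENNReal.lintegral_mul_le_Lp_mul_Lq μ hconj (hg.pow_const q)
      (aemeasurable_const (b := (1 : ℝ≥0∞)))
    simp only [Pi.mul_apply, mul_one, ENNReal.one_rpow, lintegral_one, measure_univ] at key
    have hqp' : q * (p / q) = p := by field_simp
    rw [one_div_div] at key
    calc ∫⁻ a, g a ^ q ∂μ ≤ (∫⁻ a, (g a ^ q) ^ (p / q) ∂μ) ^ (q / p) := key
    _ = (∫⁻ a, g a ^ p ∂μ) ^ (q / p) := by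
        simp_rw [← ENNReal.rpow_mul, hqp']

/-- A probability measure vanishing outside a singleton is a Dirac measure. -/
lemma eq_dirac_of_compl {Y : Type*} [MeasurableSpace Y] (μ : Measure Y)
    [IsProbabilityMeasure μ] {a : Y} (h : μ {a}ᶜ = 0) : μ = Measure.dirac a := by
  ext s hs
  rw [Measure.dirac_apply' _ hs]
  by_cases ha : a ∈ s
  · rw [Set.indicator_of_mem ha]
    have hsc : μ sᶜ = 0 := by
      refine measure_mono_null (fun x hx => ?_) h
      simp only [Set.mem_compl_iff, Set.mem_singleton_iff]
      intro hxa
      exact hx (hxa ▸ ha)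
    have h2 := measure_add_measure_compl (μ := μ) hs
    rw [hsc, add_zero, measure_univ] at h2
    simpa using h2
  · rw [Set.indicator_of_notMem ha]
    refine measure_mono_null (fun x hx => ?_) h
    simp only [Set.mem_compl_iff, Set.mem_singleton_iff]
    intro hxa
    exact ha (hxa ▸ hx)

lemma Wp_self {Y : Type*} [MeasurableSpace Y] [PseudoEMetricSpace Y]
    [SecondCountableTopology Y] [OpensMeasurableSpace Y] {q : ℝ} (hq : 0 < q)
    (μ : Measure Y) : Wp q μ μ = 0 := by
  have hdiag : Measurable fun x : Y => (x, x) := measurable_id.prodMk measurable_id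
  have hcoup : IsCoupling (μ.map fun x => (x, x)) μ μ := by
    constructor
    · rw [Measure.map_map measurable_fst hdiag]
      exact Measure.map_id
    · rw [Measure.map_map measurable_snd hdiag]
      exact Measure.map_id
  have h0 : (⨅ π : {π : Measure (Y × Y) // IsCoupling π μ μ},
      ∫⁻ z, edist z.1 z.2 ^ q ∂π.1) = 0 := by
    refine le_antisymm (le_trans (iInf_le _ ⟨_, hcoup⟩) ?_) zero_le
    rw [lintegral_map (measurable_edist.pow_const q) hdiag]
    simp [ENNReal.zero_rpow_of_pos hq]
  rw [Wp, h0, ENNReal.zero_rpow_of_pos (by positivity), ENNReal.toReal_zero]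

/-- If `c` is `β`-Hölder with constant `C_H` on `X ⊆ ℝ^n` and `β·r ≤ p`,
then `W_r(c_#γ, c_#γ̃) ≤ C_H · W_p(γ, γ̃)^β` for probability measures `γ, γ̃` on `X`
with finite `p`-th moments. -/
theorem stmt_3 {n : ℕ} (X : Set (EuclideanSpace ℝ (Fin n)))
    (p r β C_H : ℝ) (hp : 1 ≤ p) (hr : 1 ≤ r) (hβ : β ∈ Set.Ioc (0:ℝ) 1)
    (hβr : β * r ≤ p)
    (c : EuclideanSpace ℝ (Fin n) → ℝ) (hc_meas : Measurable c)
    (hc_holder : ∀ x ∈ X, ∀ y ∈ X, |c x - c y| ≤ C_H * dist x y ^ β)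
    (γ γ' : Measure (EuclideanSpace ℝ (Fin n)))
    [IsProbabilityMeasure γ] [IsProbabilityMeasure γ']
    (hγX : γ Xᶜ = 0) (hγ'X : γ' Xᶜ = 0)
    (hγp : FiniteMomentp p γ) (hγ'p : FiniteMomentp p γ') :
    Wp r (γ.map c) (γ'.map c) ≤ C_H * Wp p γ γ' ^ β := by
  have hp0 : (0:ℝ) < p := lt_of_lt_of_le one_pos hp
  have hr0 : (0:ℝ) < r := lt_of_lt_of_le one_pos hr
  have hβ0 : (0:ℝ) < β := hβ.1
  by_cases hCH : 0 ≤ C_H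
  swap
  · -- degenerate case : `X` is a subsingleton and `γ = γ'` is a Dirac measure
    push_neg at hCH
    obtain ⟨x₀, hx₀X⟩ : X.Nonempty := by
      by_contra hne
      rw [Set.not_nonempty_iff_eq_empty] at hne
      rw [hne, Set.compl_empty] at hγX
      exact one_ne_zero ((measure_univ (μ := γ)).symm.trans hγX)
    have hXsub : X ⊆ {x₀} := by
      intro y hy
      by_contra hyx
      rw [Set.mem_singleton_iff] at hyx
      have h1 := hc_holder y hy x₀ hx₀X
      have hd : 0 < dist y x₀ := dist_pos.2 hyx
      have h2 : C_H * dist y x₀ ^ β < 0 :=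
        mul_neg_of_neg_of_pos hCH (Real.rpow_pos_of_pos hd β)
      linarith [abs_nonneg (c y - c x₀)]
    have hγd : γ = Measure.dirac x₀ :=
      eq_dirac_of_compl _ (measure_mono_null (Set.compl_subset_compl.2 hXsub) hγX)
    have hγ'd : γ' = Measure.dirac x₀ :=
      eq_dirac_of_compl _ (measure_mono_null (Set.compl_subset_compl.2 hXsub) hγ'X)
    rw [hγd, hγ'd, Wp_self hr0, Wp_self hp0, Real.zero_rpow hβ0.ne', mul_zero]
  -- main case : C_H ≥ 0
  · obtain ⟨x₀, hx₀⟩ := hγp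
    obtain ⟨x₁, hx₁⟩ := hγ'p
    set C : ℝ≥0∞ := ENNReal.ofReal C_H with hC
    set q : ℝ := β * r with hq
    have hq0 : 0 < q := mul_pos hβ0 hr0
    -- the product measure is a coupling with finite cost
    have hcoupprod : IsCoupling (γ.prod γ') γ γ' := by
      constructor <;> simp
    have hmom : ∀ (μ : Measure (EuclideanSpace ℝ (Fin n))) (x' : (EuclideanSpace ℝ (Fin n))), Integrable (fun x => dist x x' ^ p) μ →
        ∫⁻ x, edist x x' ^ p ∂μ < ∞ := by
      intro μ x' hint
      have h1 : ∀ x : (EuclideanSpace ℝ (Fin n)), edist x x' ^ p = ENNReal.ofReal (dist x x' ^ p) := fun x => by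
        rw [edist_dist, ← ENNReal.ofReal_rpow_of_nonneg dist_nonneg hp0.le]
      simp_rw [h1]
      rw [← hasFiniteIntegral_iff_ofReal]
      · exact hint.hasFiniteIntegral
      · exact Eventually.of_forall fun x => Real.rpow_nonneg dist_nonneg p
    have hfin : ∫⁻ z : (EuclideanSpace ℝ (Fin n)) × (EuclideanSpace ℝ (Fin n)), edist z.1 z.2 ^ p ∂(γ.prod γ') < ∞ := by
      set D : ℝ≥0∞ := edist x₀ x₁ with hD
      have hbound : ∀ z : (EuclideanSpace ℝ (Fin n)) × (EuclideanSpace ℝ (Fin n)), edist z.1 z.2 ^ p ≤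
          (3:ℝ≥0∞) ^ p * (edist z.1 x₀ ^ p + D ^ p + edist z.2 x₁ ^ p) := by
        intro z
        set a := edist z.1 x₀
        set b := edist z.2 x₁
        set m := max a (max D b) with hm
        have h1 : edist z.1 z.2 ≤ a + D + b := by
          calc edist z.1 z.2 ≤ edist z.1 x₁ + edist x₁ z.2 := edist_triangle _ _ _
          _ ≤ (edist z.1 x₀ + edist x₀ x₁) + edist x₁ z.2 :=
              add_le_add_left (edist_triangle _ _ _) _
          _ = a + D + b := by rw [edist_comm x₁ z.2]
        have h2 : a + D + b ≤ 3 * m := by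
          have ha : a ≤ m := le_max_left _ _
          have hDm : D ≤ m := le_trans (le_max_left _ _) (le_max_right _ _)
          have hb : b ≤ m := le_trans (le_max_right _ _) (le_max_right _ _)
          calc a + D + b ≤ m + m + m := add_le_add (add_le_add ha hDm) hb
          _ = 3 * m := by ring
        have h3 : edist z.1 z.2 ^ p ≤ (3 * m) ^ p :=
          ENNReal.rpow_le_rpow (h1.trans h2) hp0.le
        have h4 : (3 * m) ^ p = 3 ^ p * m ^ p :=
          ENNReal.mul_rpow_of_nonneg _ _ hp0.le
        have h5 : m ^ p ≤ a ^ p + D ^ p + b ^ p := by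
          rcases max_cases a (max D b) with ⟨he, _⟩ | ⟨he, _⟩
          · rw [hm, he]
            calc a ^ p ≤ a ^ p + D ^ p := le_self_add
            _ ≤ a ^ p + D ^ p + b ^ p := le_self_add
          · rcases max_cases D b with ⟨he2, _⟩ | ⟨he2, _⟩
            · rw [hm, he, he2]
              calc D ^ p ≤ a ^ p + D ^ p := le_add_self
              _ ≤ a ^ p + D ^ p + b ^ p := le_self_add
            · rw [hm, he, he2]
              exact le_add_self
        calc edist z.1 z.2 ^ p ≤ 3 ^ p * m ^ p := h4 ▸ h3
        _ ≤ _ := mul_le_mul_right h5 _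
      calc ∫⁻ z : (EuclideanSpace ℝ (Fin n)) × (EuclideanSpace ℝ (Fin n)), edist z.1 z.2 ^ p ∂(γ.prod γ')
          ≤ ∫⁻ z : (EuclideanSpace ℝ (Fin n)) × (EuclideanSpace ℝ (Fin n)), (3:ℝ≥0∞) ^ p * (edist z.1 x₀ ^ p + D ^ p + edist z.2 x₁ ^ p)
            ∂(γ.prod γ') := lintegral_mono hbound
        _ < ∞ := by
            rw [lintegral_const_mul]
            · refine ENNReal.mul_lt_top (by simp [ENNReal.rpow_lt_top_of_nonneg hp0.le]) ?_
              have e1 : ∫⁻ z : (EuclideanSpace ℝ (Fin n)) × (EuclideanSpace ℝ (Fin n)), edist z.1 x₀ ^ p ∂(γ.prod γ') =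
                  ∫⁻ x, edist x x₀ ^ p ∂γ := by
                conv_rhs => rw [← hcoupprod.1]
                rw [lintegral_map (measurable_edist_left.pow_const p) measurable_fst]
              have e2 : ∫⁻ z : (EuclideanSpace ℝ (Fin n)) × (EuclideanSpace ℝ (Fin n)), edist z.2 x₁ ^ p ∂(γ.prod γ') =
                  ∫⁻ x, edist x x₁ ^ p ∂γ' := by
                conv_rhs => rw [← hcoupprod.2]
                rw [lintegral_map (measurable_edist_left.pow_const p) measurable_snd]
              rw [lintegral_add_right _ (show Measurable fun z : (EuclideanSpace ℝ (Fin n)) × (EuclideanSpace ℝ (Fin n)) => edist z.2 x₁ ^ p from (measurable_edist_left.comp measurable_snd).pow_const p),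
                lintegral_add_right _ measurable_const, e1]
              refine ENNReal.add_lt_top.2 ⟨ENNReal.add_lt_top.2 ⟨hmom γ x₀ hx₀, ?_⟩, ?_⟩
              · rw [lintegral_const]
                exact ENNReal.mul_lt_top
                  (ENNReal.rpow_lt_top_of_nonneg hp0.le (edist_lt_top _ _).ne) (by simp)
              · rw [e2]; exact hmom γ' x₁ hx₁
            · exact ((measurable_edist_left.comp measurable_fst).pow_const p |>.add
                measurable_const |>.add
                ((measurable_edist_left.comp measurable_snd).pow_const p))
    haveI hne : Nonempty {π : Measure ((EuclideanSpace ℝ (Fin n)) × (EuclideanSpace ℝ (Fin n))) // IsCoupling π γ γ'} := ⟨⟨_, hcoupprod⟩⟩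
    set A : ℝ≥0∞ := ⨅ π : {π : Measure ((EuclideanSpace ℝ (Fin n)) × (EuclideanSpace ℝ (Fin n))) // IsCoupling π γ γ'},
      ∫⁻ z, edist z.1 z.2 ^ p ∂π.1 with hA
    have hAfin : A ≠ ∞ := ((iInf_le _ (⟨_, hcoupprod⟩ :
      {π : Measure ((EuclideanSpace ℝ (Fin n)) × (EuclideanSpace ℝ (Fin n))) // IsCoupling π γ γ'})).trans_lt hfin).ne
    set B : ℝ≥0∞ := ⨅ ρ : {ρ : Measure (ℝ × ℝ) // IsCoupling ρ (γ.map c) (γ'.map c)},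
      ∫⁻ z, edist z.1 z.2 ^ r ∂ρ.1 with hB
    -- key inequality for each coupling
    have hkey : ∀ π : {π : Measure ((EuclideanSpace ℝ (Fin n)) × (EuclideanSpace ℝ (Fin n))) // IsCoupling π γ γ'},
        B ^ (1/r) ≤ C * (∫⁻ z, edist z.1 z.2 ^ p ∂π.1) ^ (β / p) := by
      intro π
      haveI hπprob : IsProbabilityMeasure π.1 := by
        constructor
        have : π.1 Set.univ = (π.1.map Prod.fst) Set.univ := by
          rw [Measure.map_apply measurable_fst MeasurableSet.univ, Set.preimage_univ]
        rw [this, π.2.1, measure_univ]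
      -- pushforward coupling
      have hmapmeas : Measurable (Prod.map c c) := hc_meas.prodMap hc_meas
      have hρcoup : IsCoupling (π.1.map (Prod.map c c)) (γ.map c) (γ'.map c) := by
        constructor
        · rw [Measure.map_map measurable_fst hmapmeas]
          have : Prod.fst ∘ Prod.map c c = c ∘ (Prod.fst : (EuclideanSpace ℝ (Fin n)) × (EuclideanSpace ℝ (Fin n)) → (EuclideanSpace ℝ (Fin n))) := rfl
          rw [this, ← Measure.map_map hc_meas measurable_fst, π.2.1]
        · rw [Measure.map_map measurable_snd hmapmeas]
          have : Prod.snd ∘ Prod.map c c = c ∘ (Prod.snd : (EuclideanSpace ℝ (Fin n)) × (EuclideanSpace ℝ (Fin n)) → (EuclideanSpace ℝ (Fin n))) := rfl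
          rw [this, ← Measure.map_map hc_meas measurable_snd, π.2.2]
      -- a.e. the points lie in X × X
      have h1 : π.1 (Prod.fst ⁻¹' Xᶜ) = 0 :=
        le_antisymm (le_trans (Measure.le_map_apply measurable_fst.aemeasurable _)
          (by rw [π.2.1]; exact hγX.le)) zero_le
      have h2 : π.1 (Prod.snd ⁻¹' Xᶜ) = 0 :=
        le_antisymm (le_trans (Measure.le_map_apply measurable_snd.aemeasurable _)
          (by rw [π.2.2]; exact hγ'X.le)) zero_le
      have hXae : ∀ᵐ z ∂π.1, z.1 ∈ X ∧ z.2 ∈ X := by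
        rw [ae_iff]
        refine measure_mono_null ?_ (measure_union_null h1 h2)
        intro z hz
        simp only [Set.mem_setOf_eq, not_and_or] at hz
        exact hz.imp id id
      -- pointwise a.e. Hölder bound
      have haebnd : ∀ᵐ z ∂π.1, edist (c z.1) (c z.2) ^ r ≤ C ^ r * edist z.1 z.2 ^ q := by
        filter_upwards [hXae] with z hz
        have hb : edist (c z.1) (c z.2) ≤ C * edist z.1 z.2 ^ β := by
          rw [edist_dist, Real.dist_eq]
          calc ENNReal.ofReal |c z.1 - c z.2| ≤ ENNReal.ofReal (C_H * dist z.1 z.2 ^ β) :=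
            ENNReal.ofReal_le_ofReal (hc_holder _ hz.1 _ hz.2)
          _ = C * ENNReal.ofReal (dist z.1 z.2 ^ β) := ENNReal.ofReal_mul hCH
          _ = C * edist z.1 z.2 ^ β := by
              rw [← ENNReal.ofReal_rpow_of_nonneg dist_nonneg hβ0.le, ← edist_dist]
        calc edist (c z.1) (c z.2) ^ r ≤ (C * edist z.1 z.2 ^ β) ^ r :=
          ENNReal.rpow_le_rpow hb hr0.le
        _ = C ^ r * (edist z.1 z.2 ^ β) ^ r := ENNReal.mul_rpow_of_nonneg _ _ hr0.le
        _ = C ^ r * edist z.1 z.2 ^ q := by rw [← ENNReal.rpow_mul]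
      -- integral bound
      have hint : ∫⁻ z, edist (c z.1) (c z.2) ^ r ∂π.1 ≤
          C ^ r * (∫⁻ z, edist z.1 z.2 ^ p ∂π.1) ^ (q / p) := by
        calc ∫⁻ z, edist (c z.1) (c z.2) ^ r ∂π.1
            ≤ ∫⁻ z, C ^ r * edist z.1 z.2 ^ q ∂π.1 := lintegral_mono_ae haebnd
          _ = C ^ r * ∫⁻ z, edist z.1 z.2 ^ q ∂π.1 := by
              rw [lintegral_const_mul _ (measurable_edist.pow_const q)]
          _ ≤ C ^ r * (∫⁻ z, edist z.1 z.2 ^ p ∂π.1) ^ (q / p) :=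
              mul_le_mul_right (my_jensen _ measurable_edist.aemeasurable hq0 hβr) _
      have hBle : B ≤ C ^ r * (∫⁻ z, edist z.1 z.2 ^ p ∂π.1) ^ (q / p) := by
        refine le_trans (iInf_le _ (⟨_, hρcoup⟩ :
          {ρ : Measure (ℝ × ℝ) // IsCoupling ρ (γ.map c) (γ'.map c)})) ?_
        rw [lintegral_map (measurable_edist.pow_const r) hmapmeas]
        exact hint
      calc B ^ (1/r) ≤ (C ^ r * (∫⁻ z, edist z.1 z.2 ^ p ∂π.1) ^ (q / p)) ^ (1/r) :=
        ENNReal.rpow_le_rpow hBle (by positivity)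
      _ = C * (∫⁻ z, edist z.1 z.2 ^ p ∂π.1) ^ (β / p) := by
          rw [ENNReal.mul_rpow_of_nonneg _ _ (by positivity : (0:ℝ) ≤ 1/r),
            ← ENNReal.rpow_mul, ← ENNReal.rpow_mul, mul_one_div, div_self hr0.ne',
            ENNReal.rpow_one]
          congr 2
          field_simp
          ring
    have hβp : (0:ℝ) < β / p := by positivity
    have hmain : B ^ (1/r) ≤ C * A ^ (β / p) := by
      have h1 : A ^ (β / p) = ⨅ π : {π : Measure ((EuclideanSpace ℝ (Fin n)) × (EuclideanSpace ℝ (Fin n))) // IsCoupling π γ γ'},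
          (∫⁻ z, edist z.1 z.2 ^ p ∂π.1) ^ (β / p) :=
        (ENNReal.orderIsoRpow (β / p) hβp).map_iInf _
      rw [h1, ENNReal.mul_iInf (fun h => absurd h ENNReal.ofReal_ne_top)]
      exact le_iInf hkey
    -- conclude by passing to real numbers
    have hRHSfin : C * A ^ (β / p) ≠ ∞ :=
      ENNReal.mul_ne_top ENNReal.ofReal_ne_top (ENNReal.rpow_ne_top_of_nonneg hβp.le hAfin)
    rw [Wp, Wp]
    calc (B ^ (1/r)).toReal ≤ (C * A ^ (β / p)).toReal := ENNReal.toReal_mono hRHSfin hmain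
    _ = C_H * (A ^ (1/p)).toReal ^ β := by
        rw [ENNReal.toReal_mul, hC, ENNReal.toReal_ofReal hCH, ENNReal.toReal_rpow,
          ← ENNReal.rpow_mul]
        congr 2
        rw [one_div_mul_eq_div]
end
end

section
/- There is a constant C > 0 depending only on D and p with the following property. Let 𝑿_j ⊆ ℝ^{d_j}, ρ_j ∈ P_p(𝑿_j) for j = 1,…,D, let Y = (y_1,…,y_N) ∈ 𝑿^N and δ_Y = N^{-1}Σ_i δ_{y_i}, with projections δ_{Y_j} = π^j_#δ_Y. Then there exists a joint measure γ ∈ Γ(ρ_1,…,ρ_D) such that W_p(γ, δ_Y) ≤ C (Σ_{j=1}^D W_p(ρ_j, δ_{Y_j})^p)^{1/p}. -/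
open MeasureTheory Set Filter
open scoped ENNReal NNReal Topology

noncomputable section

/-- Uniform empirical measure `N⁻¹ Σᵢ δ_{z i}` of a point cloud. -/
def empirical {X : Type*} [MeasurableSpace X] {N : ℕ} (z : Fin N → X) : Measure X :=
  ((N : ℝ≥0∞))⁻¹ • ∑ i, Measure.dirac (z i)

/-- `N`-point uniform quantization error of order `p`. -/
def quantErr {X : Type*} [MeasurableSpace X] [PseudoEMetricSpace X] (p : ℝ) (N : ℕ)
    (ν : Measure X) : ℝ :=
  sInf {r : ℝ | ∃ z : Fin N → X, r = Wp p ν (empirical z)}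

/-- Topological support of a measure. -/
def msupport {X : Type*} [TopologicalSpace X] [MeasurableSpace X] (μ : Measure X) : Set X :=
  {x | ∀ U : Set X, IsOpen U → x ∈ U → μ U ≠ 0}

/-- Weak (narrow) convergence of a sequence of measures. -/
def WeakLim {X : Type*} [MeasurableSpace X] [TopologicalSpace X]
    (μs : ℕ → Measure X) (γ : Measure X) : Prop :=
  ∀ f : BoundedContinuousFunction X ℝ,
    Tendsto (fun k => ∫ x, f x ∂(μs k)) atTop (𝓝 (∫ x, f x ∂γ))

/-- Multimarginal couplings `Γ(ρ_1,…,ρ_D)`. -/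
def Coupl {D : ℕ} {d : Fin D → ℕ}
    (ρ : ∀ j : Fin D, Measure (EuclideanSpace ℝ (Fin (d j))))
    (γ : Measure (∀ j : Fin D, EuclideanSpace ℝ (Fin (d j)))) : Prop :=
  IsProbabilityMeasure γ ∧ ∀ j, γ.map (fun x => x j) = ρ j


section BlockHelpers

open scoped Classical

variable {X : Type*} [MeasurableSpace X]

lemma map_finsetSum' {ι Y' : Type*} [MeasurableSpace Y'] (s : Finset ι) (μ : ι → Measure X)
    {f : X → Y'} (hf : Measurable f) :
    (∑ i ∈ s, μ i).map f = ∑ i ∈ s, (μ i).map f := by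
  ext t ht
  rw [Measure.map_apply hf ht, Measure.finset_sum_apply, Measure.finset_sum_apply]
  simp_rw [Measure.map_apply hf ht]

lemma empirical_univ {N : ℕ} (hN : N ≠ 0) (z : Fin N → X) : empirical z univ = 1 := by
  simp only [empirical, Measure.smul_apply, Measure.finset_sum_apply, Measure.dirac_apply' _ MeasurableSet.univ]
  simp only [indicator_of_mem (mem_univ _), Pi.one_apply, Finset.sum_const, Finset.card_univ,
    Fintype.card_fin, nsmul_eq_mul, mul_one, smul_eq_mul]
  rw [ENNReal.inv_mul_cancel] <;> simp [hN]

lemma isProbabilityMeasure_empirical {N : ℕ} (hN : N ≠ 0) (z : Fin N → X) :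
    IsProbabilityMeasure (empirical z) := ⟨empirical_univ hN z⟩

lemma empirical_map {Y' : Type*} [MeasurableSpace Y'] {N : ℕ} (z : Fin N → X)
    {f : X → Y'} (hf : Measurable f) :
    (empirical z).map f = empirical (fun i => f (z i)) := by
  rw [empirical, Measure.map_smul, map_finsetSum' _ _ hf, empirical]
  congr 1
  refine Finset.sum_congr rfl (fun i _ => ?_)
  exact Measure.map_dirac' hf (z i)

lemma empirical_singleton [MeasurableSingletonClass X] {N : ℕ} (z : Fin N → X) (a : X) :
    empirical z {a} = (N : ℝ≥0∞)⁻¹ * ((Finset.univ.filter (fun k => z k = a)).card : ℝ≥0∞) := by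
  simp only [empirical, Measure.smul_apply, Measure.finset_sum_apply, smul_eq_mul]
  congr 1
  rw [← Finset.sum_boole]
  refine Finset.sum_congr rfl (fun i _ => ?_)
  by_cases h : z i = a <;> simp [Measure.dirac_apply', h]

lemma group_sum {N : ℕ} (z : Fin N → X) (h : X → ℝ≥0∞) :
    ∑ i, (((Finset.univ.filter (fun k => z k = z i)).card : ℝ≥0∞))⁻¹ * h (z i)
      = ∑ a ∈ Finset.univ.image z, h a := by
  rw [Finset.sum_comp (fun a => ((Finset.univ.filter (fun k => z k = a)).card : ℝ≥0∞)⁻¹ * h a) z]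
  refine Finset.sum_congr rfl (fun a ha => ?_)
  have hm : ((Finset.univ.filter (fun k => z k = a)).card : ℝ≥0∞) ≠ 0 := by
    obtain ⟨i, _, rfl⟩ := Finset.mem_image.mp ha
    simp only [ne_eq, Nat.cast_eq_zero, Finset.card_eq_zero]
    exact Finset.nonempty_iff_ne_empty.mp ⟨i, Finset.mem_filter.mpr ⟨Finset.mem_univ i, rfl⟩⟩
  rw [nsmul_eq_mul, ← mul_assoc, ENNReal.mul_inv_cancel hm (ENNReal.natCast_ne_top _), one_mul]

lemma pi_map_eval {D : ℕ} {E : Fin D → Type*} [∀ j, MeasurableSpace (E j)]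
    (μ : ∀ j, Measure (E j)) [∀ j, IsProbabilityMeasure (μ j)] (j : Fin D) :
    (Measure.pi μ).map (fun x => x j) = μ j := by
  ext s hs
  rw [Measure.map_apply (measurable_pi_apply j) hs]
  have h1 : (fun x : ∀ k, E k => x j) ⁻¹' s = Set.univ.pi (Function.update (fun k => (univ : Set (E k))) j s) := by
    ext x
    simp only [mem_preimage, Set.mem_pi, mem_univ, forall_true_left]
    constructor
    · intro hx k
      by_cases hk : k = j
      · subst hk; simpa using hx
      · simp [Function.update_of_ne hk]
    · intro hx; simpa using hx j
  rw [h1, Measure.pi_pi]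
  rw [Finset.prod_eq_single j (fun k _ hk => by simp [Function.update_of_ne hk]) (by simp)]
  simp


lemma glue [MeasurableSingletonClass X] {N : ℕ} (hN : N ≠ 0) (z : Fin N → X)
    (ρ : Measure X) [IsProbabilityMeasure ρ]
    (π : Measure (X × X)) (hπ : IsCoupling π ρ (empirical z)) :
    ∃ μ : Fin N → Measure X,
      (∀ i, IsProbabilityMeasure (μ i)) ∧
      ((N : ℝ≥0∞))⁻¹ • ∑ i, μ i = ρ ∧
      ∀ g : X × X → ℝ≥0∞, Measurable g →
        (N : ℝ≥0∞)⁻¹ * ∑ i, ∫⁻ x, g (x, z i) ∂(μ i) ≤ ∫⁻ w, g w ∂π := by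
  have hN' : (N : ℝ≥0∞) ≠ 0 := by simpa using hN
  set m : X → ℕ := fun a => (Finset.univ.filter (fun k => z k = a)).card with hm_def
  set Q : X → Measure X := fun a => (π.restrict (univ ×ˢ {a})).map Prod.fst with hQ_def
  set μ : Fin N → Measure X := fun i => ((N : ℝ≥0∞) * ((m (z i) : ℝ≥0∞))⁻¹) • Q (z i) with hμ_def
  set A : Finset X := Finset.univ.image z with hA_def
  have hmne : ∀ i, (m (z i) : ℝ≥0∞) ≠ 0 := by
    intro i
    simp only [hm_def, ne_eq, Nat.cast_eq_zero, Finset.card_eq_zero]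
    exact Finset.nonempty_iff_ne_empty.mp ⟨i, Finset.mem_filter.mpr ⟨Finset.mem_univ i, rfl⟩⟩
  have hQapp : ∀ (a : X) (s : Set X), MeasurableSet s → Q a s = π (s ×ˢ {a}) := by
    intro a s hs
    rw [hQ_def]
    rw [Measure.map_apply measurable_fst hs,
      Measure.restrict_apply (measurable_fst hs)]
    congr 1
    ext ⟨x, y⟩
    simp only [mem_inter_iff, mem_preimage, Set.mem_prod, mem_univ, mem_singleton_iff, true_and]
  have hsing : ∀ a : X, π (univ ×ˢ ({a} : Set X)) = (N : ℝ≥0∞)⁻¹ * (m a : ℝ≥0∞) := by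
    intro a
    have h1 : π.map Prod.snd {a} = empirical z {a} := by rw [hπ.2]
    rw [Measure.map_apply measurable_snd (measurableSet_singleton a)] at h1
    have h2 : (Prod.snd ⁻¹' ({a} : Set X) : Set (X × X)) = univ ×ˢ {a} := by
      ext ⟨x, y⟩; simp [eq_comm]
    rw [h2] at h1
    rw [h1, empirical_singleton]
  have hμuniv : ∀ i, μ i univ = 1 := by
    intro i
    simp only [hμ_def, Measure.smul_apply, smul_eq_mul]
    rw [hQapp _ _ MeasurableSet.univ, hsing]
    rw [show (N : ℝ≥0∞) * ((m (z i) : ℝ≥0∞))⁻¹ * ((N : ℝ≥0∞)⁻¹ * (m (z i) : ℝ≥0∞))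
        = ((N : ℝ≥0∞) * (N : ℝ≥0∞)⁻¹) * (((m (z i) : ℝ≥0∞))⁻¹ * (m (z i) : ℝ≥0∞)) by ring]
    rw [ENNReal.mul_inv_cancel hN' (ENNReal.natCast_ne_top N),
      ENNReal.inv_mul_cancel (hmne i) (ENNReal.natCast_ne_top _), one_mul]
  have hAc : π (univ ×ˢ ((A : Set X))ᶜ) = 0 := by
    have h2 : (Prod.snd ⁻¹' (((A : Set X))ᶜ) : Set (X × X)) = univ ×ˢ ((A : Set X))ᶜ := by
      ext ⟨x, y⟩; simp
    have h1 : π.map Prod.snd ((A : Set X))ᶜ = empirical z ((A : Set X))ᶜ := by rw [hπ.2]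
    rw [Measure.map_apply measurable_snd (A.measurableSet.compl), h2] at h1
    rw [h1, empirical]
    simp only [Measure.smul_apply, Measure.finset_sum_apply, smul_eq_mul]
    have : ∀ i : Fin N, Measure.dirac (z i) ((A : Set X))ᶜ = 0 := by
      intro i
      rw [Measure.dirac_apply' _ (A.measurableSet.compl)]
      simp [hA_def, Set.indicator_apply, Finset.mem_image]
    simp [this]
  have hprodA : ∀ (s : Set X), MeasurableSet s → π (s ×ˢ (A : Set X)) = π (s ×ˢ univ) := by
    intro s hs
    refine le_antisymm (measure_mono (Set.prod_mono le_rfl (subset_univ _))) ?_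
    have hsub : s ×ˢ (univ : Set X) ⊆ (s ×ˢ (A : Set X)) ∪ (univ ×ˢ ((A : Set X))ᶜ) := by
      rintro ⟨x, y⟩ ⟨hx, -⟩
      by_cases hy : y ∈ (A : Set X)
      · exact Or.inl ⟨hx, hy⟩
      · exact Or.inr ⟨trivial, hy⟩
    calc π (s ×ˢ (univ : Set X)) ≤ π ((s ×ˢ (A : Set X)) ∪ (univ ×ˢ ((A : Set X))ᶜ)) :=
          measure_mono hsub
      _ ≤ π (s ×ˢ (A : Set X)) + π (univ ×ˢ ((A : Set X))ᶜ) := measure_union_le _ _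
      _ = π (s ×ˢ (A : Set X)) := by rw [hAc, add_zero]
  have hdisj : ∀ (s : Set X), Set.PairwiseDisjoint (A : Set X) (fun a => s ×ˢ ({a} : Set X)) := by
    intro s a _ b _ hab
    simp only [Function.onFun, Set.disjoint_left]
    rintro ⟨x, y⟩ ⟨-, hy1⟩ ⟨-, hy2⟩
    exact hab (by rw [← hy1, hy2])
  have hunion : ∀ s : Set X, s ×ˢ (A : Set X) = ⋃ a ∈ A, s ×ˢ ({a} : Set X) := by
    intro s; ext ⟨x, y⟩
    simp only [Set.mem_prod, mem_iUnion, mem_singleton_iff, Finset.mem_coe]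
    constructor
    · rintro ⟨hx, hy⟩; exact ⟨y, hy, hx, rfl⟩
    · rintro ⟨a, ha, hx, rfl⟩; exact ⟨hx, ha⟩
  have hsum_prod : ∀ (s : Set X), MeasurableSet s →
      ∑ a ∈ A, π (s ×ˢ ({a} : Set X)) = π (s ×ˢ (univ : Set X)) := by
    intro s hs
    rw [← hprodA s hs, hunion s]
    exact (measure_biUnion_finset (hdisj s)
      (fun a _ => hs.prod (measurableSet_singleton a))).symm
  refine ⟨μ, fun i => ⟨hμuniv i⟩, ?_, ?_⟩
  · ext s hs
    simp only [Measure.smul_apply, Measure.finset_sum_apply, smul_eq_mul, hμ_def,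
      Measure.smul_apply]
    have hterm : ∀ i : Fin N, ((N : ℝ≥0∞) * ((m (z i) : ℝ≥0∞))⁻¹) • Q (z i) s
        = (N : ℝ≥0∞) * (((m (z i) : ℝ≥0∞))⁻¹ * π (s ×ˢ {z i})) := by
      intro i
      rw [smul_eq_mul, hQapp _ _ hs]; ring
    calc (N : ℝ≥0∞)⁻¹ * ∑ i, ((N : ℝ≥0∞) * ((m (z i) : ℝ≥0∞))⁻¹) • Q (z i) s
        = (N : ℝ≥0∞)⁻¹ * ∑ i, (N : ℝ≥0∞) * (((m (z i) : ℝ≥0∞))⁻¹ * π (s ×ˢ {z i})) := by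
          congr 1
          exact Finset.sum_congr rfl (fun i _ => hterm i)
      _ = (N : ℝ≥0∞)⁻¹ * ((N : ℝ≥0∞) * ∑ i, ((m (z i) : ℝ≥0∞))⁻¹ * π (s ×ˢ {z i})) := by
          rw [← Finset.mul_sum]
      _ = ∑ i, ((m (z i) : ℝ≥0∞))⁻¹ * π (s ×ˢ {z i}) := by
          rw [← mul_assoc, ENNReal.inv_mul_cancel hN' (ENNReal.natCast_ne_top N), one_mul]
      _ = ∑ a ∈ A, π (s ×ˢ ({a} : Set X)) := group_sum z (fun a => π (s ×ˢ ({a} : Set X)))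
      _ = π (s ×ˢ (univ : Set X)) := hsum_prod s hs
      _ = ρ s := by
          rw [← hπ.1, Measure.map_apply measurable_fst hs]
          congr 1
          ext w; simp [Set.mem_prod]
  · intro g hg
    have hint : ∀ i : Fin N, ∫⁻ x, g (x, z i) ∂(μ i)
        = ((N : ℝ≥0∞) * ((m (z i) : ℝ≥0∞))⁻¹) *
            ∫⁻ w in univ ×ˢ ({z i} : Set X), g w ∂π := by
      intro i
      rw [hμ_def]
      simp only [lintegral_smul_measure, smul_eq_mul]
      congr 1
      show ∫⁻ x, g (x, z i) ∂((π.restrict (univ ×ˢ {z i})).map Prod.fst) = _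
      rw [lintegral_map (show Measurable fun x => g (x, z i) from
        hg.comp measurable_prodMk_right) measurable_fst]
      refine setLIntegral_congr_fun (MeasurableSet.univ.prod (measurableSet_singleton _)) ?_
      intro w hw
      dsimp only
      have : w.2 = z i := hw.2
      rw [show ((w.1, z i) : X × X) = w by rw [← this]]
    calc (N : ℝ≥0∞)⁻¹ * ∑ i, ∫⁻ x, g (x, z i) ∂(μ i)
        = (N : ℝ≥0∞)⁻¹ * ∑ i, (N : ℝ≥0∞) * (((m (z i) : ℝ≥0∞))⁻¹ *
            ∫⁻ w in univ ×ˢ ({z i} : Set X), g w ∂π) := by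
          congr 1
          refine Finset.sum_congr rfl (fun i _ => ?_)
          rw [hint i]; ring
      _ = (N : ℝ≥0∞)⁻¹ * ((N : ℝ≥0∞) * ∑ i, ((m (z i) : ℝ≥0∞))⁻¹ *
            ∫⁻ w in univ ×ˢ ({z i} : Set X), g w ∂π) := by
          rw [← Finset.mul_sum]
      _ = ∑ i, ((m (z i) : ℝ≥0∞))⁻¹ * ∫⁻ w in univ ×ˢ ({z i} : Set X), g w ∂π := by
          rw [← mul_assoc, ENNReal.inv_mul_cancel hN' (ENNReal.natCast_ne_top N), one_mul]
      _ = ∑ a ∈ A, ∫⁻ w in univ ×ˢ ({a} : Set X), g w ∂π :=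
          group_sum z (fun a => ∫⁻ w in univ ×ˢ ({a} : Set X), g w ∂π)
      _ = ∫⁻ w in ⋃ a ∈ A, univ ×ˢ ({a} : Set X), g w ∂π := by
          rw [lintegral_biUnion_finset (hdisj univ)
            (fun a _ => MeasurableSet.univ.prod (measurableSet_singleton a)) g]
      _ ≤ ∫⁻ w, g w ∂π := setLIntegral_le_lintegral _ _

lemma eq_empirical_of_costs_small {X : Type*} [MeasurableSpace X] [EMetricSpace X]
    [OpensMeasurableSpace X] [SecondCountableTopology X] {p : ℝ} (hp : 0 < p) {N : ℕ}
    (hN : N ≠ 0) (z : Fin N → X) (ρ : Measure X) [IsProbabilityMeasure ρ]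
    (h : ∀ ε : ℝ≥0∞, 0 < ε → ∃ π : Measure (X × X), IsCoupling π ρ (empirical z) ∧
      ∫⁻ w, edist w.1 w.2 ^ p ∂π ≤ ε) :
    ρ = empirical z := by
  classical
  haveI : IsProbabilityMeasure (empirical z) := isProbabilityMeasure_empirical hN z
  set A : Finset X := Finset.univ.image z with hA_def
  -- Step A: empirical mass of each singleton is at most ρ's
  have stepA : ∀ a : X, empirical z {a} ≤ ρ {a} := by
    intro a
    have ball_bound : ∀ t : ℝ≥0∞, 0 < t → t ≠ ⊤ → empirical z {a} ≤ ρ (Metric.eball a t) := by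
      intro t ht ht'
      apply ENNReal.le_of_forall_pos_le_add
      intro δ hδ _
      have htp : (0:ℝ≥0∞) < t ^ p := ENNReal.rpow_pos ht ht'
      have htp' : t ^ p ≠ ⊤ := ENNReal.rpow_ne_top_of_nonneg hp.le ht'
      obtain ⟨π, hπ, hcost⟩ := h ((δ : ℝ≥0∞) * t ^ p)
        (ENNReal.mul_pos (by exact_mod_cast hδ.ne') htp.ne')
      have hmble : Measurable fun w : X × X => edist w.1 w.2 ^ p :=
        measurable_edist.pow_const p
      have hmarkov : π {w : X × X | t ^ p ≤ edist w.1 w.2 ^ p} ≤ δ := by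
        calc π {w : X × X | t ^ p ≤ edist w.1 w.2 ^ p}
            ≤ (∫⁻ w, edist w.1 w.2 ^ p ∂π) / t ^ p :=
              meas_ge_le_lintegral_div hmble.aemeasurable htp.ne' htp'
          _ ≤ ((δ : ℝ≥0∞) * t ^ p) / t ^ p := by gcongr
          _ = δ := by rw [mul_div_assoc, ENNReal.div_self htp.ne' htp', mul_one]
      have hsub : (Prod.snd ⁻¹' ({a} : Set X) : Set (X × X)) ⊆
          (Prod.fst ⁻¹' Metric.eball a t) ∪ {w : X × X | t ^ p ≤ edist w.1 w.2 ^ p} := by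
        rintro ⟨x, y⟩ hy
        simp only [mem_preimage, mem_singleton_iff] at hy
        rw [mem_union, mem_preimage, mem_setOf_eq]
        simp only [hy]
        by_cases hd : edist x a < t
        · exact Or.inl hd
        · exact Or.inr (ENNReal.rpow_le_rpow (not_lt.mp hd) hp.le)
      have h1 : empirical z {a} = π (Prod.snd ⁻¹' ({a} : Set X)) := by
        rw [← hπ.2, Measure.map_apply measurable_snd (measurableSet_singleton a)]
      have h2 : π (Prod.fst ⁻¹' Metric.eball a t) = ρ (Metric.eball a t) := by
        rw [← hπ.1, Measure.map_apply measurable_fst Metric.isOpen_eball.measurableSet]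
      calc empirical z {a} = π (Prod.snd ⁻¹' ({a} : Set X)) := h1
        _ ≤ π (Prod.fst ⁻¹' Metric.eball a t) + π {w : X × X | t ^ p ≤ edist w.1 w.2 ^ p} :=
            le_trans (measure_mono hsub) (measure_union_le _ _)
        _ ≤ ρ (Metric.eball a t) + δ := by rw [h2]; gcongr
    have hinter : (⋂ n : ℕ, Metric.eball a (((n+1 : ℕ) : ℝ≥0∞))⁻¹) = {a} := by
      ext x
      simp only [mem_iInter, Metric.mem_eball, mem_singleton_iff]
      constructor
      · intro hx
        by_contra hne
        have hpos : 0 < edist x a := by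
          simp only [pos_iff_ne_zero, ne_eq, edist_eq_zero]
          exact hne
        obtain ⟨n, hn⟩ := ENNReal.exists_inv_nat_lt hpos.ne'
        have := hx n
        have hle : (((n+1:ℕ) : ℝ≥0∞))⁻¹ ≤ ((n : ℝ≥0∞))⁻¹ := by
          gcongr; exact_mod_cast Nat.le_succ n
        exact absurd (this.trans_le hle) (not_lt.mpr hn.le)
      · intro hx; subst hx
        intro n
        simp only [edist_self]
        exact ENNReal.inv_pos.mpr (ENNReal.natCast_ne_top _)
    have hmeas : ρ {a} = ⨅ n : ℕ, ρ (Metric.eball a (((n+1 : ℕ) : ℝ≥0∞))⁻¹) := by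
      rw [← hinter]
      refine Directed.measure_iInter
        (fun n => Metric.isOpen_eball.measurableSet.nullMeasurableSet) ?_
        ⟨0, measure_ne_top _ _⟩
      intro i j
      refine ⟨max i j, Metric.eball_subset_eball ?_, Metric.eball_subset_eball ?_⟩ <;>
        (gcongr <;> simp [Nat.succ_le_succ, le_max_left, le_max_right])
    rw [hmeas]
    refine le_iInf fun n => ball_bound _ ?_ ?_
    · simp
    · simp
  -- sums over the atoms
  have hfin_sum : ∀ (μ' : Measure X), μ' (A : Set X) = ∑ a ∈ A, μ' {a} := by
    intro μ'
    have : (A : Set X) = ⋃ a ∈ A, ({a} : Set X) := by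
      ext x; simp
    rw [this, measure_biUnion_finset ?_ (fun a _ => measurableSet_singleton a)]
    intro a _ b _ hab
    simp only [Function.onFun, Set.disjoint_left, mem_singleton_iff]
    rintro x rfl h2
    exact hab h2
  have hempA : empirical z (A : Set X) = 1 := by
    have hsub : ∀ i : Fin N, Measure.dirac (z i) (A : Set X) = 1 := by
      intro i
      rw [Measure.dirac_apply' _ A.measurableSet]
      simp [hA_def, Set.indicator_apply]
    simp only [empirical, Measure.smul_apply, Measure.finset_sum_apply, smul_eq_mul, hsub]
    simp only [Finset.sum_const, Finset.card_univ, Fintype.card_fin, nsmul_eq_mul, mul_one]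
    rw [ENNReal.inv_mul_cancel] <;> simp [hN]
  have hsum_emp : ∑ a ∈ A, empirical z {a} = 1 := by rw [← hfin_sum, hempA]
  have hsum_rho_le : ∑ a ∈ A, ρ {a} ≤ 1 := by
    rw [← hfin_sum]
    exact prob_le_one
  -- pointwise equality on atoms (via reals)
  have hsingle : ∀ a ∈ A, ρ {a} = empirical z {a} := by
    have hle : ∀ a ∈ A, (empirical z {a}).toReal ≤ (ρ {a}).toReal := by
      intro a _
      exact ENNReal.toReal_mono (measure_ne_top _ _) (stepA a)
    have hsum1 : ∑ a ∈ A, (empirical z {a}).toReal = 1 := by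
      rw [← ENNReal.toReal_sum (fun a _ => measure_ne_top _ _), hsum_emp, ENNReal.toReal_one]
    have hsum2 : ∑ a ∈ A, (ρ {a}).toReal ≤ 1 := by
      rw [← ENNReal.toReal_one, ← ENNReal.toReal_sum (fun a _ => measure_ne_top _ _)]
      exact ENNReal.toReal_mono (by simp) hsum_rho_le
    have heq : ∑ a ∈ A, (ρ {a}).toReal = ∑ a ∈ A, (empirical z {a}).toReal := by
      rw [hsum1]
      refine le_antisymm hsum2 ?_
      rw [← hsum1]
      exact Finset.sum_le_sum hle
    intro a ha
    have := (Finset.sum_eq_sum_iff_of_le hle).mp heq.symm a ha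
    have h2 : (empirical z {a}).toReal = (ρ {a}).toReal := this
    exact ((ENNReal.toReal_eq_toReal_iff' (measure_ne_top _ _) (measure_ne_top _ _)).mp h2).symm
  have hrhoA : ρ (A : Set X) = 1 := by
    rw [hfin_sum, Finset.sum_congr rfl hsingle, ← hfin_sum, hempA]
  have hrhoAc : ρ ((A : Set X))ᶜ = 0 := by
    rw [measure_compl A.measurableSet (measure_ne_top _ _), hrhoA, measure_univ, tsub_self]
  have hempAc : empirical z ((A : Set X))ᶜ = 0 := by
    rw [measure_compl A.measurableSet (measure_ne_top _ _), hempA, measure_univ, tsub_self]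
  -- conclude
  ext s hs
  have key : ∀ (μ' : Measure X), μ' ((A : Set X))ᶜ = 0 → μ' s = ∑ a ∈ A.filter (· ∈ s), μ' {a} := by
    intro μ' hμ'
    have h1 : μ' s = μ' (s ∩ (A : Set X)) := by
      refine le_antisymm ?_ (measure_mono Set.inter_subset_left)
      calc μ' s ≤ μ' ((s ∩ (A : Set X)) ∪ ((A : Set X))ᶜ) := by
            refine measure_mono fun x hx => ?_
            by_cases hxA : x ∈ (A : Set X)
            · exact Or.inl ⟨hx, hxA⟩
            · exact Or.inr hxA
        _ ≤ μ' (s ∩ (A : Set X)) + μ' ((A : Set X))ᶜ := measure_union_le _ _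
        _ = μ' (s ∩ (A : Set X)) := by rw [hμ', add_zero]
    have h2 : s ∩ (A : Set X) = ⋃ a ∈ A.filter (· ∈ s), ({a} : Set X) := by
      ext x
      simp only [mem_inter_iff, Finset.coe_filter, mem_iUnion, mem_singleton_iff,
        Finset.mem_filter, mem_setOf_eq, Finset.mem_coe]
      constructor
      · rintro ⟨hxs, hxA⟩; exact ⟨x, ⟨hxA, hxs⟩, rfl⟩
      · rintro ⟨a, ⟨haA, has⟩, rfl⟩; exact ⟨has, haA⟩
    rw [h1, h2, measure_biUnion_finset ?_ (fun a _ => measurableSet_singleton a)]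
    intro a _ b _ hab
    simp only [Function.onFun, Set.disjoint_left, mem_singleton_iff]
    rintro x rfl h2
    exact hab h2
  rw [key ρ hrhoAc, key (empirical z) hempAc]
  exact Finset.sum_congr rfl (fun a ha => hsingle a (Finset.mem_filter.mp ha).1)

lemma exists_coupling_cost_lt_top {X : Type*} [MeasurableSpace X] [MetricSpace X]
    [OpensMeasurableSpace X] [SecondCountableTopology X] {p : ℝ} (hp : 0 ≤ p)
    (ρ : Measure X) [IsProbabilityMeasure ρ] (hmom : FiniteMomentp p ρ)
    {N : ℕ} (hN : N ≠ 0) (z : Fin N → X) :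
    ∃ π : Measure (X × X), IsCoupling π ρ (empirical z) ∧
      ∫⁻ w, edist w.1 w.2 ^ p ∂π < ⊤ := by
  haveI : IsProbabilityMeasure (empirical z) := isProbabilityMeasure_empirical hN z
  obtain ⟨x₀, hx₀⟩ := hmom
  refine ⟨ρ.prod (empirical z), ⟨?_, ?_⟩, ?_⟩
  · rw [Measure.map_fst_prod]; simp
  · rw [Measure.map_snd_prod]; simp
  · have hbound : ∀ w : X × X, edist w.1 w.2 ^ p ≤
        (2 : ℝ≥0∞) ^ p * (edist w.1 x₀ ^ p + edist x₀ w.2 ^ p) := by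
      rintro ⟨x, y⟩
      have h1 : edist x y ≤ 2 * max (edist x x₀) (edist x₀ y) := by
        calc edist x y ≤ edist x x₀ + edist x₀ y := edist_triangle _ _ _
          _ ≤ max (edist x x₀) (edist x₀ y) + max (edist x x₀) (edist x₀ y) := by
              gcongr
              · exact le_max_left _ _
              · exact le_max_right _ _
          _ = 2 * max (edist x x₀) (edist x₀ y) := (two_mul _).symm
      calc edist x y ^ p ≤ (2 * max (edist x x₀) (edist x₀ y)) ^ p :=
            ENNReal.rpow_le_rpow h1 hp
        _ = 2 ^ p * max (edist x x₀) (edist x₀ y) ^ p := by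
            rw [ENNReal.mul_rpow_of_nonneg _ _ hp]
        _ ≤ 2 ^ p * (edist x x₀ ^ p + edist x₀ y ^ p) := by
            gcongr
            rcases le_total (edist x x₀) (edist x₀ y) with hle | hle
            · rw [max_eq_right hle]
              exact le_add_self
            · rw [max_eq_left hle]
              exact le_self_add
    have hM1 : ∫⁻ w : X × X, edist w.1 x₀ ^ p ∂(ρ.prod (empirical z)) < ⊤ := by
      have hmap : ∫⁻ w : X × X, edist w.1 x₀ ^ p ∂(ρ.prod (empirical z))
          = ∫⁻ x, edist x x₀ ^ p ∂ρ := by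
        have := lintegral_map (μ := ρ.prod (empirical z))
          (f := fun x : X => edist x x₀ ^ p)
          ((measurable_edist_left).pow_const p) measurable_fst
        rw [← this, Measure.map_fst_prod]
        simp
      rw [hmap]
      have heq : ∀ x : X, edist x x₀ ^ p = ENNReal.ofReal (dist x x₀ ^ p) := by
        intro x
        rw [edist_dist, ← ENNReal.ofReal_rpow_of_nonneg dist_nonneg hp]
      simp_rw [heq]
      exact hx₀.lintegral_lt_top
    have hM2 : ∫⁻ w : X × X, edist x₀ w.2 ^ p ∂(ρ.prod (empirical z)) < ⊤ := by
      have hmap : ∫⁻ w : X × X, edist x₀ w.2 ^ p ∂(ρ.prod (empirical z))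
          = ∫⁻ y, edist x₀ y ^ p ∂(empirical z) := by
        have := lintegral_map (μ := ρ.prod (empirical z))
          (f := fun y : X => edist x₀ y ^ p)
          ((measurable_edist_right).pow_const p) measurable_snd
        rw [← this, Measure.map_snd_prod]
        simp
      rw [hmap, empirical, lintegral_smul_measure, lintegral_finset_sum_measure]
      have hterm : ∀ i : Fin N, ∫⁻ y, edist x₀ y ^ p ∂(Measure.dirac (z i)) < ⊤ := by
        intro i
        rw [lintegral_dirac' _ ((measurable_edist_right).pow_const p)]
        exact ENNReal.rpow_lt_top_of_nonneg hp (edist_ne_top _ _)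
      have hNpos : (0:ℝ≥0∞) < N := by exact_mod_cast Nat.pos_of_ne_zero hN
      exact ENNReal.mul_lt_top (ENNReal.inv_lt_top.mpr hNpos)
        (ENNReal.sum_lt_top.mpr (fun i _ => hterm i))
    calc ∫⁻ w, edist w.1 w.2 ^ p ∂(ρ.prod (empirical z))
        ≤ ∫⁻ w : X × X, (2 : ℝ≥0∞) ^ p * (edist w.1 x₀ ^ p + edist x₀ w.2 ^ p)
            ∂(ρ.prod (empirical z)) := lintegral_mono hbound
      _ = (2 : ℝ≥0∞) ^ p * ((∫⁻ w : X × X, edist w.1 x₀ ^ p ∂(ρ.prod (empirical z)))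
            + ∫⁻ w : X × X, edist x₀ w.2 ^ p ∂(ρ.prod (empirical z))) := by
          have hma : Measurable fun w : X × X => edist w.1 x₀ ^ p :=
            (measurable_edist_left.comp measurable_fst).pow_const p
          have hmb : Measurable fun w : X × X => edist x₀ w.2 ^ p :=
            (measurable_edist_right.comp measurable_snd).pow_const p
          rw [lintegral_const_mul _ (show Measurable fun w : X × X => edist w.1 x₀ ^ p + edist x₀ w.2 ^ p from hma.add hmb), lintegral_add_left hma]
      _ < ⊤ := ENNReal.mul_lt_top
          (ENNReal.rpow_lt_top_of_nonneg hp (by simp)) (ENNReal.add_lt_top.mpr ⟨hM1, hM2⟩)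

lemma pi_edist_rpow_le {D : ℕ} {E : Fin D → Type*} [∀ j, PseudoEMetricSpace (E j)]
    {p : ℝ} (hp : 0 < p) (x y : ∀ j, E j) :
    edist x y ^ p ≤ ∑ j, edist (x j) (y j) ^ p := by
  rcases isEmpty_or_nonempty (Fin D) with hD | hD
  · rw [edist_pi_def, Finset.univ_eq_empty, Finset.sum_empty, Finset.sup_empty]
    rw [show ((⊥ : ℝ≥0∞) : ℝ≥0∞) = 0 from rfl, ENNReal.zero_rpow_of_pos hp]
  · rw [edist_pi_def]
    obtain ⟨j₀, -, hj₀⟩ := Finset.exists_mem_eq_sup Finset.univ Finset.univ_nonempty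
      (fun j => edist (x j) (y j))
    rw [hj₀]
    exact Finset.single_le_sum (f := fun j => edist (x j) (y j) ^ p)
      (fun j _ => zero_le) (Finset.mem_univ j₀)

end BlockHelpers

/-- Block approximation: there is a constant `C > 0` depending only
on `D` and `p` such that any uniform `N`-point cloud `δ_Y` in `X` admits a coupling
`γ ∈ Γ(ρ_1,…,ρ_D)` with `W_p(γ, δ_Y) ≤ C (Σ_j W_p(ρ_j, δ_{Y_j})^p)^{1/p}`. -/
theorem stmt_6 (D : ℕ) (p : ℝ) (hp : 1 ≤ p) :
    ∃ C > (0:ℝ), ∀ (d : Fin D → ℕ)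
      (X : ∀ j : Fin D, Set (EuclideanSpace ℝ (Fin (d j))))
      (ρ : ∀ j : Fin D, Measure (EuclideanSpace ℝ (Fin (d j)))),
      (∀ j, IsProbabilityMeasure (ρ j)) →
      (∀ j, ρ j (X j)ᶜ = 0) →
      (∀ j, FiniteMomentp p (ρ j)) →
      ∀ (N : ℕ) (Y : Fin N → (∀ j : Fin D, EuclideanSpace ℝ (Fin (d j)))),
        1 ≤ N → (∀ i, Y i ∈ Set.univ.pi X) →
        ∃ γ : Measure (∀ j : Fin D, EuclideanSpace ℝ (Fin (d j))), Coupl ρ γ ∧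
          Wp p γ (empirical Y) ≤
            C * (∑ j, Wp p (ρ j) ((empirical Y).map (fun x => x j)) ^ p) ^ (1 / p) := by
  classical
  have hp0 : (0:ℝ) < p := lt_of_lt_of_le one_pos hp
  have hpne : p ≠ 0 := hp0.ne'
  have hpinv : (0:ℝ) < 1 / p := by positivity
  refine ⟨2, by norm_num, ?_⟩
  intro d X ρ hprob hsupp hmom N Y hN hY
  haveI := hprob
  have hNne : N ≠ 0 := Nat.one_le_iff_ne_zero.mp hN
  haveI : IsProbabilityMeasure (empirical Y) := isProbabilityMeasure_empirical hNne Y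
  have hmarg : ∀ j, (empirical Y).map (fun x : (∀ j : Fin D, EuclideanSpace ℝ (Fin (d j))) => x j) = empirical (fun i => Y i j) :=
    fun j => empirical_map Y (measurable_pi_apply j)
  set B : Fin D → ℝ≥0∞ := fun j =>
    ⨅ π : {π : Measure (EuclideanSpace ℝ (Fin (d j)) × EuclideanSpace ℝ (Fin (d j))) //
        IsCoupling π (ρ j) ((empirical Y).map (fun x : (∀ j : Fin D, EuclideanSpace ℝ (Fin (d j))) => x j))},
      ∫⁻ z, edist z.1 z.2 ^ p ∂π.1 with hB_def
  have hWp : ∀ j, Wp p (ρ j) ((empirical Y).map (fun x : (∀ j : Fin D, EuclideanSpace ℝ (Fin (d j))) => x j))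
      = ((B j) ^ (1/p)).toReal := fun j => rfl
  have hBne : ∀ j, B j ≠ ⊤ := by
    intro j
    obtain ⟨π₀, hπ₀, hc⟩ := exists_coupling_cost_lt_top hp0.le (ρ j) (hmom j) hNne
      (fun i => Y i j)
    rw [← hmarg j] at hπ₀
    exact ne_top_of_le_ne_top hc.ne (show B j ≤ _ from iInf_le (fun π : {π : Measure (EuclideanSpace ℝ (Fin (d j)) × EuclideanSpace ℝ (Fin (d j))) // IsCoupling π (ρ j) ((empirical Y).map (fun x : (∀ j : Fin D, EuclideanSpace ℝ (Fin (d j))) => x j))} => ∫⁻ z, edist z.1 z.2 ^ p ∂π.1) ⟨π₀, hπ₀⟩)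
  have hRHSnonneg : (0:ℝ) ≤ 2 * (∑ j, Wp p (ρ j) ((empirical Y).map (fun x : (∀ j : Fin D, EuclideanSpace ℝ (Fin (d j))) => x j)) ^ p) ^ (1/p) := by
    have h1 : (0:ℝ) ≤ ∑ j, Wp p (ρ j) ((empirical Y).map (fun x : (∀ j : Fin D, EuclideanSpace ℝ (Fin (d j))) => x j)) ^ p :=
      Finset.sum_nonneg fun j _ => Real.rpow_nonneg (by rw [hWp j]; exact ENNReal.toReal_nonneg) p
    positivity
  by_cases hzero : ∀ j, B j = 0
  · -- all marginal distances vanish: ρ j coincides with the empirical marginals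
    have hρeq : ∀ j, ρ j = (empirical Y).map (fun x : (∀ j : Fin D, EuclideanSpace ℝ (Fin (d j))) => x j) := by
      intro j
      rw [hmarg j]
      refine eq_empirical_of_costs_small hp0 hNne (fun i => Y i j) (ρ j) ?_
      intro ε hε
      have hlt : B j < ε := by rw [hzero j]; exact hε
      obtain ⟨⟨π, hπ⟩, hc⟩ := iInf_lt_iff.mp hlt
      rw [hmarg j] at hπ
      exact ⟨π, hπ, hc.le⟩
    refine ⟨empirical Y, ⟨inferInstance, fun j => (hρeq j).symm⟩, ?_⟩
    have hgP : Measurable fun w : (∀ j : Fin D, EuclideanSpace ℝ (Fin (d j))) × (∀ j : Fin D, EuclideanSpace ℝ (Fin (d j))) => edist w.1 w.2 ^ p := measurable_edist.pow_const p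
    have hcoup : IsCoupling ((empirical Y).map (fun x : (∀ j : Fin D, EuclideanSpace ℝ (Fin (d j))) => (x, x)))
        (empirical Y) (empirical Y) := by
      constructor
      · rw [Measure.map_map measurable_fst (show Measurable fun x : (∀ j : Fin D, EuclideanSpace ℝ (Fin (d j))) => (x, x) from measurable_id.prodMk measurable_id)]
        simp [Function.comp_def]
      · rw [Measure.map_map measurable_snd (show Measurable fun x : (∀ j : Fin D, EuclideanSpace ℝ (Fin (d j))) => (x, x) from measurable_id.prodMk measurable_id)]
        simp [Function.comp_def]
    have hcost : ∫⁻ z : (∀ j : Fin D, EuclideanSpace ℝ (Fin (d j))) × (∀ j : Fin D, EuclideanSpace ℝ (Fin (d j))), edist z.1 z.2 ^ p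
        ∂((empirical Y).map (fun x : (∀ j : Fin D, EuclideanSpace ℝ (Fin (d j))) => (x, x))) = 0 := by
      rw [lintegral_map hgP (show Measurable fun x : (∀ j : Fin D, EuclideanSpace ℝ (Fin (d j))) => (x, x) from measurable_id.prodMk measurable_id)]
      simp [edist_self, ENNReal.zero_rpow_of_pos hp0]
    have hiInf0 : (⨅ π : {π : Measure ((∀ j : Fin D, EuclideanSpace ℝ (Fin (d j))) × (∀ j : Fin D, EuclideanSpace ℝ (Fin (d j)))) // IsCoupling π (empirical Y) (empirical Y)},
        ∫⁻ z, edist z.1 z.2 ^ p ∂π.1) = 0 :=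
      le_antisymm (le_trans (iInf_le _ ⟨_, hcoup⟩) hcost.le) zero_le
    have hWzero : Wp p (empirical Y) (empirical Y) = 0 := by
      unfold Wp
      rw [hiInf0, ENNReal.zero_rpow_of_pos hpinv, ENNReal.toReal_zero]
    rw [hWzero]
    exact hRHSnonneg
  · push_neg at hzero
    obtain ⟨j₀, hj₀⟩ := hzero
    set S : ℝ≥0∞ := ∑ j, B j with hS_def
    have hSne : S ≠ 0 := by
      intro h
      exact hj₀ ((Finset.sum_eq_zero_iff.mp h) j₀ (Finset.mem_univ j₀))
    have hStop : S ≠ ⊤ := (ENNReal.sum_lt_top.mpr (fun j _ => (hBne j).lt_top)).ne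
    have hDne : (D : ℝ≥0∞) ≠ 0 := by
      simp only [ne_eq, Nat.cast_eq_zero]
      rintro rfl
      exact absurd j₀.2 (by simp)
    set ε : ℝ≥0∞ := S / (D : ℝ≥0∞) with hε_def
    have hεpos : ε ≠ 0 := by
      rw [hε_def]
      exact (ENNReal.div_pos hSne (ENNReal.natCast_ne_top D)).ne'
    have hchoice : ∀ j, ∃ π : Measure (EuclideanSpace ℝ (Fin (d j)) × EuclideanSpace ℝ (Fin (d j))),
        IsCoupling π (ρ j) (empirical (fun i => Y i j)) ∧
          ∫⁻ w, edist w.1 w.2 ^ p ∂π ≤ B j + ε := by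
      intro j
      have hlt : B j < B j + ε := ENNReal.lt_add_right (hBne j) hεpos
      obtain ⟨⟨π, hπ⟩, hc⟩ := iInf_lt_iff.mp hlt
      rw [hmarg j] at hπ
      exact ⟨π, hπ, hc.le⟩
    choose π' hπ'coup hπ'cost using hchoice
    have hglue := fun j => glue hNne (fun i => Y i j) (ρ j) (π' j) (hπ'coup j)
    choose μ hμprob hμmarg hμcost using hglue
    have hpiprob : ∀ i, IsProbabilityMeasure (Measure.pi (fun j => μ j i)) := fun i => by
      haveI : ∀ j, IsProbabilityMeasure (μ j i) := fun j => hμprob j i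
      infer_instance
    set γ : Measure (∀ j : Fin D, EuclideanSpace ℝ (Fin (d j))) := ((N : ℝ≥0∞))⁻¹ • ∑ i, Measure.pi (fun j => μ j i) with hγ_def
    have hγprob : IsProbabilityMeasure γ := by
      constructor
      rw [hγ_def]
      simp only [Measure.smul_apply, Measure.finset_sum_apply, smul_eq_mul]
      rw [Finset.sum_congr rfl (fun i _ => (hpiprob i).measure_univ)]
      simp only [Finset.sum_const, Finset.card_univ, Fintype.card_fin, nsmul_eq_mul, mul_one]
      rw [ENNReal.inv_mul_cancel] <;> simp [hNne]
    have hγmarg : ∀ j, γ.map (fun x : (∀ j : Fin D, EuclideanSpace ℝ (Fin (d j))) => x j) = ρ j := by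
      intro j
      rw [hγ_def, Measure.map_smul, map_finsetSum' _ _ (measurable_pi_apply j)]
      have heval : ∀ i : Fin N, (Measure.pi (fun j => μ j i)).map (fun x : (∀ j : Fin D, EuclideanSpace ℝ (Fin (d j))) => x j) = μ j i := by
        intro i
        haveI : ∀ j, IsProbabilityMeasure (μ j i) := fun j => hμprob j i
        exact pi_map_eval _ j
      rw [Finset.sum_congr rfl (fun i _ => heval i)]
      exact hμmarg j
    set π : Measure ((∀ j : Fin D, EuclideanSpace ℝ (Fin (d j))) × (∀ j : Fin D, EuclideanSpace ℝ (Fin (d j)))) :=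
      ((N : ℝ≥0∞))⁻¹ • ∑ i, (Measure.pi (fun j => μ j i)).map (fun x : (∀ j : Fin D, EuclideanSpace ℝ (Fin (d j))) => (x, Y i))
      with hπ_def
    have hπcoup : IsCoupling π γ (empirical Y) := by
      constructor
      · rw [hπ_def, Measure.map_smul, map_finsetSum' _ _ measurable_fst, hγ_def]
        congr 1
        refine Finset.sum_congr rfl (fun i _ => ?_)
        rw [Measure.map_map measurable_fst (show Measurable fun x : (∀ j : Fin D, EuclideanSpace ℝ (Fin (d j))) => (x, Y i) from measurable_id.prodMk measurable_const)]
        simp [Function.comp_def]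
      · rw [hπ_def, Measure.map_smul, map_finsetSum' _ _ measurable_snd, empirical]
        congr 1
        refine Finset.sum_congr rfl (fun i _ => ?_)
        rw [Measure.map_map measurable_snd (show Measurable fun x : (∀ j : Fin D, EuclideanSpace ℝ (Fin (d j))) => (x, Y i) from measurable_id.prodMk measurable_const)]
        rw [show (Prod.snd ∘ fun x : (∀ j : Fin D, EuclideanSpace ℝ (Fin (d j))) => (x, Y i)) = fun _ : (∀ j : Fin D, EuclideanSpace ℝ (Fin (d j))) => Y i from rfl,
          Measure.map_const, (hpiprob i).measure_univ, one_smul]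
    have hgP : Measurable fun w : (∀ j : Fin D, EuclideanSpace ℝ (Fin (d j))) × (∀ j : Fin D, EuclideanSpace ℝ (Fin (d j))) => edist w.1 w.2 ^ p := measurable_edist.pow_const p
    have hmeasj : ∀ (j : Fin D) (c : EuclideanSpace ℝ (Fin (d j))),
        Measurable fun x : (∀ j : Fin D, EuclideanSpace ℝ (Fin (d j))) => edist (x j) c ^ p := fun j c =>
      (measurable_edist_left.comp (measurable_pi_apply j)).pow_const p
    have hcostπ : ∫⁻ w, edist w.1 w.2 ^ p ∂π ≤ 2 * S := by
      calc ∫⁻ w, edist w.1 w.2 ^ p ∂π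
          = (N : ℝ≥0∞)⁻¹ * ∑ i, ∫⁻ x : (∀ j : Fin D, EuclideanSpace ℝ (Fin (d j))), edist x (Y i) ^ p ∂(Measure.pi (fun j => μ j i)) := by
            rw [hπ_def, lintegral_smul_measure, lintegral_finset_sum_measure]
            congr 1
            refine Finset.sum_congr rfl (fun i _ => ?_)
            rw [lintegral_map hgP (show Measurable fun x : (∀ j : Fin D, EuclideanSpace ℝ (Fin (d j))) => (x, Y i) from measurable_id.prodMk measurable_const)]
        _ ≤ (N : ℝ≥0∞)⁻¹ * ∑ i, ∑ j, ∫⁻ x : (∀ j : Fin D, EuclideanSpace ℝ (Fin (d j))), edist (x j) (Y i j) ^ p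
              ∂(Measure.pi (fun j => μ j i)) := by
            gcongr with i hi
            calc ∫⁻ x : (∀ j : Fin D, EuclideanSpace ℝ (Fin (d j))), edist x (Y i) ^ p ∂(Measure.pi (fun j => μ j i))
                ≤ ∫⁻ x : (∀ j : Fin D, EuclideanSpace ℝ (Fin (d j))), ∑ j, edist (x j) (Y i j) ^ p ∂(Measure.pi (fun j => μ j i)) :=
                  lintegral_mono (fun x => pi_edist_rpow_le hp0 x (Y i))
              _ = ∑ j, ∫⁻ x : (∀ j : Fin D, EuclideanSpace ℝ (Fin (d j))), edist (x j) (Y i j) ^ p ∂(Measure.pi (fun j => μ j i)) :=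
                  lintegral_finset_sum _ (fun j _ => hmeasj j (Y i j))
        _ = ∑ j, (N : ℝ≥0∞)⁻¹ * ∑ i, ∫⁻ t, edist t (Y i j) ^ p ∂(μ j i) := by
            rw [Finset.sum_comm, Finset.mul_sum]
            refine Finset.sum_congr rfl (fun j _ => ?_)
            congr 1
            refine Finset.sum_congr rfl (fun i _ => ?_)
            haveI : ∀ k, IsProbabilityMeasure (μ k i) := fun k => hμprob k i
            rw [← lintegral_map (((measurable_edist_left).pow_const p)) (measurable_pi_apply j),
              pi_map_eval]
        _ ≤ ∑ j, ∫⁻ w, edist w.1 w.2 ^ p ∂(π' j) := by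
            refine Finset.sum_le_sum (fun j _ => ?_)
            have := hμcost j (fun w => edist w.1 w.2 ^ p) (measurable_edist.pow_const p)
            simpa using this
        _ ≤ ∑ j, (B j + ε) := Finset.sum_le_sum (fun j _ => hπ'cost j)
        _ = S + (D : ℝ≥0∞) * ε := by
            rw [Finset.sum_add_distrib, hS_def]
            simp [Finset.sum_const, Finset.card_univ, nsmul_eq_mul]
        _ = 2 * S := by
            rw [hε_def, ENNReal.mul_div_cancel hDne (ENNReal.natCast_ne_top D), two_mul]
    refine ⟨γ, ⟨hγprob, hγmarg⟩, ?_⟩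
    have h2Sne : (2 : ℝ≥0∞) * S ≠ ⊤ := ENNReal.mul_ne_top (by simp) hStop
    have hLHS : Wp p γ (empirical Y) ≤ (((2 : ℝ≥0∞) * S) ^ (1/p)).toReal := by
      unfold Wp
      refine ENNReal.toReal_mono (ENNReal.rpow_ne_top_of_nonneg hpinv.le h2Sne) ?_
      refine ENNReal.rpow_le_rpow ?_ hpinv.le
      exact le_trans (iInf_le _ ⟨π, hπcoup⟩) hcostπ
    refine le_trans hLHS ?_
    have hsum_eq : ∑ j, Wp p (ρ j) ((empirical Y).map (fun x : (∀ j : Fin D, EuclideanSpace ℝ (Fin (d j))) => x j)) ^ p = S.toReal := by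
      rw [hS_def, ENNReal.toReal_sum (fun j _ => hBne j)]
      refine Finset.sum_congr rfl (fun j _ => ?_)
      rw [hWp j, ← ENNReal.toReal_rpow, ← Real.rpow_mul ENNReal.toReal_nonneg,
        one_div_mul_cancel hpne, Real.rpow_one]
    rw [hsum_eq, ← ENNReal.toReal_rpow, ENNReal.toReal_mul]
    rw [show ((2:ℝ≥0∞)).toReal = 2 by simp]
    rw [Real.mul_rpow (by norm_num) ENNReal.toReal_nonneg]
    have h2le : (2:ℝ) ^ (1/p) ≤ 2 := by
      calc (2:ℝ) ^ (1/p) ≤ (2:ℝ) ^ (1:ℝ) :=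
            Real.rpow_le_rpow_of_exponent_le one_le_two (by rw [div_le_one hp0]; exact hp)
        _ = 2 := Real.rpow_one 2
    exact mul_le_mul_of_nonneg_right h2le (Real.rpow_nonneg ENNReal.toReal_nonneg _)
end
end

section
/- There is a constant c₀ > 0 depending only on D and p such that for any two finite positive measures γ, γ̃ on 𝑿 = 𝑿_1×…×𝑿_D with finite p-th moments and equal total mass, W_p(γ, γ̃)^p ≥ c₀ Σ_{j=1}^D W_{p,max}(π^j_#γ, π^j_#γ̃)^p. -/
open MeasureTheory Set Filter
open scoped ENNReal NNReal Topology

noncomputable section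

/-- `ζ` is a partial coupling of `ρ` and `ν` transporting the maximal amount of mass:
it has total mass `min(ρ(univ), ν(univ))` and marginals dominated by `ρ` and `ν`. -/
def IsPartialCoupling {X Y : Type*} [MeasurableSpace X] [MeasurableSpace Y]
    (ζ : Measure (X × Y)) (ρ : Measure X) (ν : Measure Y) : Prop :=
  ζ Set.univ = min (ρ Set.univ) (ν Set.univ) ∧
  ζ.map Prod.fst ≤ ρ ∧ ζ.map Prod.snd ≤ ν

/-- Partial `p`-Wasserstein cost `W_{p,max}`. -/
def Wpmax {X : Type*} [MeasurableSpace X] [PseudoEMetricSpace X] (p : ℝ)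
    (ρ ν : Measure X) : ℝ :=
  ((⨅ ζ : {ζ : Measure (X × X) // IsPartialCoupling ζ ρ ν},
      ∫⁻ z, edist z.1 z.2 ^ p ∂ζ.1) ^ (1 / p)).toReal

/-- If `dist · x₀ ^ p` is integrable, the corresponding `lintegral` is finite. -/
lemma moment_lintegral_ne_top {X : Type*} [MeasurableSpace X] [PseudoMetricSpace X]
    {p : ℝ} (hp0 : 0 ≤ p) {μ : Measure X} {x₀ : X}
    (h : Integrable (fun x => dist x x₀ ^ p) μ) :
    ∫⁻ x, edist x x₀ ^ p ∂μ ≠ ⊤ := by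
  have h2 := (hasFiniteIntegral_def _ _).mp h.2
  refine ne_of_lt (lt_of_le_of_lt (le_of_eq (lintegral_congr fun x => ?_)) h2)
  rw [edist_dist, ENNReal.ofReal_rpow_of_nonneg dist_nonneg hp0,
    Real.enorm_eq_ofReal (Real.rpow_nonneg dist_nonneg p)]

/-- `(a+b+c)^p ≤ 3^p (a^p + b^p + c^p)` in `ℝ≥0∞`. -/
lemma ennreal_add3_rpow {p : ℝ} (hp0 : 0 ≤ p) (a b c : ℝ≥0∞) :
    (a + b + c) ^ p ≤ 3 ^ p * (a ^ p + b ^ p + c ^ p) := by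
  have hmono : Monotone (fun x : ℝ≥0∞ => x ^ p) := fun u v h => ENNReal.rpow_le_rpow h hp0
  have h2 : a + b + c ≤ 3 * (a ⊔ b ⊔ c) := by
    have h3 : (3 : ℝ≥0∞) * (a ⊔ b ⊔ c) = (a ⊔ b ⊔ c) + (a ⊔ b ⊔ c) + (a ⊔ b ⊔ c) := by ring
    rw [h3]
    gcongr
    · exact le_sup_of_le_left le_sup_left
    · exact le_sup_of_le_left le_sup_right
    · exact le_sup_right
  calc (a + b + c) ^ p ≤ (3 * (a ⊔ b ⊔ c)) ^ p := ENNReal.rpow_le_rpow h2 hp0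
    _ = 3 ^ p * (a ⊔ b ⊔ c) ^ p := ENNReal.mul_rpow_of_nonneg _ _ hp0
    _ ≤ 3 ^ p * (a ^ p + b ^ p + c ^ p) := by
        refine mul_le_mul_right ?_ _
        have := hmono.map_max (a := a ⊔ b) (b := c)
        rw [this, hmono.map_max (a := a) (b := b)]
        refine sup_le (sup_le ?_ ?_) ?_
        · exact le_add_right (le_add_right le_rfl)
        · exact le_add_right (le_add_left le_rfl)
        · exact le_add_left le_rfl

/-- There is a constant `c₀ > 0` depending only on `D` and `p` such
that for equal-mass measures `γ, γ̃` on a product `X_1×…×X_D`,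
`W_p(γ,γ̃)^p ≥ c₀ Σ_j W_{p,max}(π^j_#γ, π^j_#γ̃)^p`. -/
theorem stmt_14 (D : ℕ) (p : ℝ) (hp : 1 ≤ p) :
    ∃ c₀ > (0:ℝ), ∀ (d : Fin D → ℕ)
      (γ γ' : Measure (Π j : Fin D, EuclideanSpace ℝ (Fin (d j)))),
      IsFiniteMeasure γ → IsFiniteMeasure γ' → γ Set.univ = γ' Set.univ →
      FiniteMomentp p γ → FiniteMomentp p γ' →
      c₀ * ∑ j, Wpmax p (γ.map (fun x => x j)) (γ'.map (fun x => x j)) ^ p ≤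
        Wp p γ γ' ^ p := by
  have hp0 : (0:ℝ) ≤ p := le_trans zero_le_one hp
  have hp0' : (0:ℝ) < 1 / p := by positivity
  refine ⟨1 / (D + 1), by positivity, ?_⟩
  intro d γ γ' hγ hγ' hmass hmγ hmγ'
  haveI := hγ; haveI := hγ'
  set X := (Π j : Fin D, EuclideanSpace ℝ (Fin (d j))) with hX
  have hcm : Measurable (fun z : X × X => edist z.1 z.2 ^ p) :=
    ENNReal.continuous_rpow_const.measurable.comp measurable_edist
  -- Step A: a coupling with finite cost exists
  have hA : ∃ π : Measure (X × X), IsCoupling π γ γ' ∧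
      (∫⁻ z, edist z.1 z.2 ^ p ∂π) ≠ ⊤ := by
    rcases eq_or_ne (γ Set.univ) 0 with h0 | h0
    · have hγ0 : γ = 0 := Measure.measure_univ_eq_zero.mp h0
      have hγ'0 : γ' = 0 := Measure.measure_univ_eq_zero.mp (hmass ▸ h0)
      exact ⟨0, ⟨by simp [hγ0], by simp [hγ'0]⟩, by simp⟩
    · obtain ⟨x₀, hx₀⟩ := hmγ
      obtain ⟨x₁, hx₁⟩ := hmγ'
      have hmt : γ Set.univ ≠ ⊤ := measure_ne_top γ _
      refine ⟨(γ Set.univ)⁻¹ • γ.prod γ', ⟨?_, ?_⟩, ?_⟩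
      · rw [Measure.map_smul, Measure.map_fst_prod, ← hmass, smul_smul,
          ENNReal.inv_mul_cancel h0 hmt, one_smul]
      · rw [Measure.map_smul, Measure.map_snd_prod, smul_smul,
          ENNReal.inv_mul_cancel h0 hmt, one_smul]
      · rw [lintegral_smul_measure]
        refine ENNReal.mul_ne_top (ENNReal.inv_ne_top.mpr h0) ?_
        have m1 : Measurable fun z : X × X => edist z.1 x₀ ^ p :=
          ENNReal.continuous_rpow_const.measurable.comp
            ((continuous_fst.edist continuous_const).measurable)
        have m3 : Measurable fun z : X × X => edist x₁ z.2 ^ p :=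
          ENNReal.continuous_rpow_const.measurable.comp
            ((continuous_const.edist continuous_snd).measurable)
        have key : ∀ z : X × X, edist z.1 z.2 ^ p ≤
            3 ^ p * (edist z.1 x₀ ^ p + edist x₀ x₁ ^ p + edist x₁ z.2 ^ p) := by
          intro z
          refine le_trans (ENNReal.rpow_le_rpow (edist_triangle4 z.1 x₀ x₁ z.2) hp0) ?_
          exact ennreal_add3_rpow hp0 _ _ _
        refine ne_top_of_le_ne_top ?_ (lintegral_mono key)
        rw [lintegral_const_mul _ (f := fun z : X × X =>
            edist z.1 x₀ ^ p + edist x₀ x₁ ^ p + edist x₁ z.2 ^ p) ((m1.add measurable_const).add m3),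
          lintegral_add_right _ m3, lintegral_add_right _ measurable_const,
          lintegral_const]
        have hmeas1 : Measurable fun x : X => edist x x₀ ^ p :=
          ENNReal.continuous_rpow_const.measurable.comp
            ((continuous_id.edist continuous_const).measurable)
        have hmeas3 : Measurable fun y : X => edist x₁ y ^ p :=
          ENNReal.continuous_rpow_const.measurable.comp
            ((continuous_const.edist continuous_id).measurable)
        have e1 : ∫⁻ z : X × X, edist z.1 x₀ ^ p ∂(γ.prod γ') =
            γ' Set.univ * ∫⁻ x, edist x x₀ ^ p ∂γ := by
          have h := lintegral_map (μ := γ.prod γ') hmeas1 measurable_fst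
          rw [Measure.map_fst_prod, lintegral_smul_measure] at h
          exact h.symm
        have e3 : ∫⁻ z : X × X, edist x₁ z.2 ^ p ∂(γ.prod γ') =
            γ Set.univ * ∫⁻ y, edist x₁ y ^ p ∂γ' := by
          have h := lintegral_map (μ := γ.prod γ') hmeas3 measurable_snd
          rw [Measure.map_snd_prod, lintegral_smul_measure] at h
          exact h.symm
        rw [e1, e3]
        have t1 : γ' Set.univ * ∫⁻ x, edist x x₀ ^ p ∂γ ≠ ⊤ :=
          ENNReal.mul_ne_top (measure_ne_top γ' _) (moment_lintegral_ne_top hp0 hx₀)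
        have t2 : edist x₀ x₁ ^ p * (γ.prod γ') Set.univ ≠ ⊤ :=
          ENNReal.mul_ne_top (ENNReal.rpow_lt_top_of_nonneg hp0 (edist_ne_top _ _)).ne
            (measure_ne_top _ _)
        have t3 : γ Set.univ * ∫⁻ y, edist x₁ y ^ p ∂γ' ≠ ⊤ := by
          refine ENNReal.mul_ne_top (measure_ne_top γ _) ?_
          have := moment_lintegral_ne_top hp0 hx₁
          refine ne_top_of_le_ne_top this (le_of_eq (lintegral_congr fun y => ?_))
          rw [edist_comm]
        exact ENNReal.mul_ne_top
          (ENNReal.rpow_lt_top_of_nonneg hp0 (by simp)).ne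
          (ENNReal.add_ne_top.mpr ⟨ENNReal.add_ne_top.mpr ⟨t1, t2⟩, t3⟩)
  obtain ⟨π₀, hπ₀, hπ₀f⟩ := hA
  set I := ⨅ π : {π : Measure (X × X) // IsCoupling π γ γ'},
    ∫⁻ z, edist z.1 z.2 ^ p ∂π.1 with hIdef
  have hIne : I ≠ ⊤ := ne_top_of_le_ne_top hπ₀f (iInf_le _ (⟨π₀, hπ₀⟩ : {π : Measure (X × X) // IsCoupling π γ γ'}))
  have hWp : Wp p γ γ' = (I ^ (1 / p)).toReal := rfl
  -- Step B: each partial Wasserstein cost is at most Wp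
  have hstep : ∀ j : Fin D,
      Wpmax p (γ.map (fun x => x j)) (γ'.map (fun x => x j)) ≤ Wp p γ γ' := by
    intro j
    set E := EuclideanSpace ℝ (Fin (d j))
    have hcm' : Measurable (fun z : E × E => edist z.1 z.2 ^ p) :=
      ENNReal.continuous_rpow_const.measurable.comp measurable_edist
    have hJ : (⨅ ζ : {ζ : Measure (E × E) //
        IsPartialCoupling ζ (γ.map (fun x => x j)) (γ'.map (fun x => x j))},
        ∫⁻ z, edist z.1 z.2 ^ p ∂ζ.1) ≤ I := by
      refine le_iInf fun π => ?_
      have hfm : Measurable (fun z : X × X => (z.1 j, z.2 j)) :=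
        ((measurable_pi_apply j).comp measurable_fst).prodMk
          ((measurable_pi_apply j).comp measurable_snd)
      have hπuniv : π.1 Set.univ = γ Set.univ := by
        conv_rhs => rw [← π.2.1]
        rw [Measure.map_apply measurable_fst MeasurableSet.univ, Set.preimage_univ]
      have hcoup : IsPartialCoupling (π.1.map (fun z : X × X => (z.1 j, z.2 j)))
          (γ.map (fun x => x j)) (γ'.map (fun x => x j)) := by
        refine ⟨?_, ?_, ?_⟩
        · rw [Measure.map_apply hfm MeasurableSet.univ, Set.preimage_univ,
            Measure.map_apply (measurable_pi_apply j) MeasurableSet.univ,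
            Measure.map_apply (measurable_pi_apply j) MeasurableSet.univ,
            hπuniv, hmass]
          simp [hmass]
        · refine le_of_eq ?_
          rw [Measure.map_map measurable_fst hfm]
          conv_rhs => rw [← π.2.1]
          rw [Measure.map_map (measurable_pi_apply j) measurable_fst]
          rfl
        · refine le_of_eq ?_
          rw [Measure.map_map measurable_snd hfm]
          conv_rhs => rw [← π.2.2]
          rw [Measure.map_map (measurable_pi_apply j) measurable_snd]
          rfl
      calc (⨅ ζ : {ζ : Measure (E × E) //
            IsPartialCoupling ζ (γ.map (fun x => x j)) (γ'.map (fun x => x j))},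
            ∫⁻ z, edist z.1 z.2 ^ p ∂ζ.1)
          ≤ ∫⁻ z, edist z.1 z.2 ^ p ∂(π.1.map (fun z : X × X => (z.1 j, z.2 j))) :=
            iInf_le _ (⟨_, hcoup⟩ : {ζ : Measure (E × E) //
              IsPartialCoupling ζ (γ.map (fun x => x j)) (γ'.map (fun x => x j))})
        _ = ∫⁻ z : X × X, edist (z.1 j) (z.2 j) ^ p ∂π.1 := lintegral_map hcm' hfm
        _ ≤ ∫⁻ z, edist z.1 z.2 ^ p ∂π.1 :=
            lintegral_mono fun z => ENNReal.rpow_le_rpow (edist_le_pi_edist _ _ j) hp0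
    rw [hWp]
    exact ENNReal.toReal_mono
      (ENNReal.rpow_lt_top_of_nonneg hp0'.le hIne).ne
      (ENNReal.rpow_le_rpow hJ hp0'.le)
  -- Step C: conclude
  have hWnn : (0:ℝ) ≤ Wp p γ γ' ^ p := Real.rpow_nonneg ENNReal.toReal_nonneg p
  have hsum : ∑ j, Wpmax p (γ.map (fun x => x j)) (γ'.map (fun x => x j)) ^ p ≤
      (D : ℝ) * Wp p γ γ' ^ p := by
    calc ∑ j, Wpmax p (γ.map (fun x => x j)) (γ'.map (fun x => x j)) ^ p
        ≤ ∑ _j : Fin D, Wp p γ γ' ^ p :=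
          Finset.sum_le_sum fun j _ =>
            Real.rpow_le_rpow ENNReal.toReal_nonneg (hstep j) hp0
      _ = (D : ℝ) * Wp p γ γ' ^ p := by
          simp [Finset.sum_const, Finset.card_univ, nsmul_eq_mul]
  have hfrac : (1 / ((D : ℝ) + 1)) * (D : ℝ) ≤ 1 := by
    rw [div_mul_eq_mul_div, one_mul, div_le_one (by positivity)]
    linarith [Nat.cast_nonneg (α := ℝ) D]
  calc (1 / ((D:ℝ) + 1)) * ∑ j, Wpmax p (γ.map (fun x => x j)) (γ'.map (fun x => x j)) ^ p
      ≤ (1 / ((D:ℝ) + 1)) * ((D : ℝ) * Wp p γ γ' ^ p) :=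
        mul_le_mul_of_nonneg_left hsum (by positivity)
    _ = ((1 / ((D:ℝ) + 1)) * (D : ℝ)) * Wp p γ γ' ^ p := by ring
    _ ≤ 1 * Wp p γ γ' ^ p := mul_le_mul_of_nonneg_right hfrac hWnn
    _ = Wp p γ γ' ^ p := one_mul _
end
end

section
/- There is a constant C > 0 depending only on D and p with the following property. Let m ∈ (0,1), let ρ_j ∈ P_p(𝑿_j) for j = 1,…,D, let Y = (y_1,…,y_N) ∈ 𝑿^N, and let mδ_Y be the uniform cloud of mass m on the points y_i, with projections mδ_{Y_j} = π^j_#(mδ_Y). Then there exists a positive measure γ ∈ Γ_m(ρ_1,…,ρ_D) such that W_p(γ, mδ_Y) ≤ C (Σ_{j=1}^D W_{p,max}(ρ_j, mδ_{Y_j})^p)^{1/p}. -/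
open MeasureTheory Set Filter
open scoped ENNReal NNReal Topology

noncomputable section

/-- Uniform cloud of total mass `m` on `N` points: `(m/N) Σᵢ δ_{z i}`. -/
def empiricalm {X : Type*} [MeasurableSpace X] (m : ℝ) {N : ℕ} (z : Fin N → X) : Measure X :=
  (ENNReal.ofReal m / (N : ℝ≥0∞)) • ∑ i, Measure.dirac (z i)

/-- `N`-point uniform quantization error of order `p` by clouds of mass `m`. -/
def quantErrm {X : Type*} [MeasurableSpace X] [PseudoEMetricSpace X] (m p : ℝ) (N : ℕ)
    (ν : Measure X) : ℝ :=
  sInf {r : ℝ | ∃ z : Fin N → X, r = Wp p ν (empiricalm m z)}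

/-- The set `Γ_m(ρ_1,…,ρ_D)`: positive measures of mass `m` on the product space
whose marginals are dominated by the `ρ_j`. -/
def CouplPart {D : ℕ} {d : Fin D → ℕ} (m : ℝ)
    (ρ : ∀ j : Fin D, Measure (EuclideanSpace ℝ (Fin (d j))))
    (γ : Measure (∀ j : Fin D, EuclideanSpace ℝ (Fin (d j)))) : Prop :=
  γ Set.univ = ENNReal.ofReal m ∧ ∀ j, γ.map (fun x => x j) ≤ ρ j


lemma meas_eq_of_le_of_univ {X : Type*} [MeasurableSpace X] {μ ν : Measure X}
    (h : μ ≤ ν) (hfin : ν univ ≠ ∞) (hm : μ univ = ν univ) : μ = ν := by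
  ext s hs
  have h1 : μ s ≤ ν s := h s
  have h2 : μ sᶜ ≤ ν sᶜ := h sᶜ
  have hadd : μ s + μ sᶜ = ν s + ν sᶜ := by
    rw [measure_add_measure_compl hs, measure_add_measure_compl hs, hm]
  refine le_antisymm h1 ?_
  have hc : ν sᶜ ≠ ⊤ := fun hc => hfin (top_le_iff.mp (hc ▸ measure_mono (subset_univ sᶜ)))
  have : ν s + ν sᶜ ≤ μ s + ν sᶜ := by
    calc ν s + ν sᶜ = μ s + μ sᶜ := hadd.symm
      _ ≤ μ s + ν sᶜ := add_le_add_right h2 _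
  exact (ENNReal.add_le_add_iff_right hc).mp this

lemma map_eval_pi {ι : Type*} [Fintype ι] [DecidableEq ι] {X : ι → Type*} [∀ i, MeasurableSpace (X i)]
    (μ : ∀ i, Measure (X i)) [∀ i, IsProbabilityMeasure (μ i)] (i : ι) :
    (Measure.pi μ).map (fun x => x i) = μ i := by
  ext s hs
  rw [Measure.map_apply (measurable_pi_apply i) hs]
  have : (fun x : ∀ j, X j => x i) ⁻¹' s = Set.pi univ (Function.update (fun j => (univ : Set (X j))) i s) := by
    ext x
    simp only [mem_preimage, Set.mem_pi, mem_univ, forall_true_left]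
    constructor
    · intro hx j
      rcases eq_or_ne j i with rfl | hj
      · simpa using hx
      · simp [Function.update_of_ne hj]
    · intro hx
      have := hx i
      simpa using this
  rw [this, Measure.pi_pi]
  rw [Fintype.prod_eq_single i ?_]
  · simp
  · intro j hj
    simp [Function.update_of_ne hj]

lemma edist_rpow_le_sum {ι : Type*} [Fintype ι] {X : ι → Type*} [∀ i, PseudoEMetricSpace (X i)]
    {p : ℝ} (hp : 0 < p) (x y : ∀ i, X i) :
    edist x y ^ p ≤ ∑ i, edist (x i) (y i) ^ p := by
  have h1 : edist x y ≤ (∑ i, edist (x i) (y i) ^ p) ^ (1/p) := by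
    rw [edist_pi_def]
    refine Finset.sup_le fun i _ => ?_
    have h2 : edist (x i) (y i) = (edist (x i) (y i) ^ p) ^ (1/p) := by
      rw [← ENNReal.rpow_mul, mul_one_div, div_self hp.ne', ENNReal.rpow_one]
    rw [h2]
    refine ENNReal.rpow_le_rpow ?_ (by positivity)
    exact Finset.single_le_sum (f := fun i => edist (x i) (y i) ^ p) (fun _ _ => zero_le) (Finset.mem_univ i)
  calc edist x y ^ p ≤ ((∑ i, edist (x i) (y i) ^ p) ^ (1/p)) ^ p :=
        ENNReal.rpow_le_rpow h1 hp.le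
    _ = ∑ i, edist (x i) (y i) ^ p := by
        rw [← ENNReal.rpow_mul, one_div_mul_cancel hp.ne', ENNReal.rpow_one]

lemma map_finset_sum_meas {α β A : Type*} [MeasurableSpace α] [MeasurableSpace β]
    {f : α → β} (hf : Measurable f) (s : Finset A) (μ : A → Measure α) :
    (∑ a ∈ s, μ a).map f = ∑ a ∈ s, (μ a).map f := by
  simp only [← Measure.mapₗ_apply_of_measurable hf]
  exact map_sum (Measure.mapₗ f) μ s

lemma empiricalm_map {X Y : Type*} [MeasurableSpace X] [MeasurableSpace Y]
    {f : X → Y} (hf : Measurable f) (m : ℝ) {N : ℕ} (z : Fin N → X) :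
    (empiricalm m z).map f = empiricalm m (fun k => f (z k)) := by
  unfold empiricalm
  rw [Measure.map_smul, map_finset_sum_meas hf]
  congr 1
  refine Finset.sum_congr rfl fun k _ => ?_
  exact Measure.map_dirac' hf (z k)

lemma empiricalm_univ {X : Type*} [MeasurableSpace X] (m : ℝ) {N : ℕ} (hN : 0 < N)
    (z : Fin N → X) : empiricalm m z univ = ENNReal.ofReal m := by
  unfold empiricalm
  rw [Measure.smul_apply, Measure.finset_sum_apply]
  simp only [Measure.dirac_apply_of_mem (mem_univ _), Finset.sum_const, Finset.card_univ,
    Fintype.card_fin, nsmul_eq_mul, smul_eq_mul]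
  rw [mul_one, ENNReal.div_mul_cancel (by exact_mod_cast hN.ne') (by simp)]

section Construction
variable {ι : Type*} [Fintype ι] {X : ι → Type*}
  [∀ i, MeasurableSpace (X i)] [∀ i, PseudoEMetricSpace (X i)]
  [∀ i, BorelSpace (X i)] [∀ i, SecondCountableTopology (X i)]
  [∀ i, MeasurableSingletonClass (X i)]

lemma construction_cost (p : ℝ) (hp : 0 < p)
    (ρ : ∀ i, Measure (X i)) [∀ i, IsProbabilityMeasure (ρ i)]
    (m : ℝ) (hm0 : 0 < m) (hm1 : m ≤ 1) {N : ℕ} (hN : 0 < N)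
    (Y : Fin N → ∀ i, X i)
    (ζ : ∀ i, Measure (X i × X i))
    (hζ : ∀ i, IsPartialCoupling (ζ i) (ρ i) ((empiricalm m Y).map (fun x => x i))) :
    ∃ γ : Measure (∀ i, X i),
      γ univ = ENNReal.ofReal m ∧ (∀ i, γ.map (fun x => x i) ≤ ρ i) ∧
      (⨅ π : {π : Measure ((∀ i, X i) × (∀ i, X i)) // IsCoupling π γ (empiricalm m Y)},
        ∫⁻ z, edist z.1 z.2 ^ p ∂π.1) ≤ ∑ i, ∫⁻ z, edist z.1 z.2 ^ p ∂(ζ i) := by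
  classical
  set c : ℝ≥0∞ := ENNReal.ofReal m / N with hc
  have hc0 : c ≠ 0 := by
    simp only [hc, ne_eq, ENNReal.div_eq_zero_iff, ENNReal.ofReal_eq_zero, not_or]
    exact ⟨by simpa using hm0, by simp⟩
  have hctop : c ≠ ⊤ := by
    simp only [hc]
    exact (ENNReal.div_lt_top (by simp) (by exact_mod_cast hN.ne')).ne
  set ν : ∀ i, Measure (X i) := fun i => (empiricalm m Y).map (fun x => x i) with hν
  have hνe : ∀ i, ν i = empiricalm m (fun k => Y k i) := fun i =>
    empiricalm_map (measurable_pi_apply i) m Y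
  have hνi : ∀ i, ν i = c • ∑ k, Measure.dirac (Y k i) := fun i => hνe i
  have hνuniv : ∀ i, ν i univ = ENNReal.ofReal m := by
    intro i
    rw [hνe i]
    exact empiricalm_univ m hN _
  -- number of indices with the same i-th coordinate
  set cnt : ι → Fin N → ℕ := fun i k => (Finset.univ.filter fun k' => Y k' i = Y k i).card
    with hcnt
  have hcnt0 : ∀ i k, cnt i k ≠ 0 := by
    intro i k
    simp only [hcnt, ne_eq, Finset.card_eq_zero, Finset.filter_eq_empty_iff]
    push_neg
    exact ⟨k, Finset.mem_univ k, rfl⟩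
  have hνsingle : ∀ i k, ν i {Y k i} = c * cnt i k := by
    intro i k
    rw [hνi i, Measure.smul_apply, Measure.finset_sum_apply, smul_eq_mul]
    congr 1
    show _ = ((Finset.univ.filter fun k' => Y k' i = Y k i).card : ℝ≥0∞)
    rw [Finset.card_filter]
    push_cast
    refine Finset.sum_congr rfl fun k' _ => ?_
    by_cases h : Y k' i = Y k i
    · simp [h, Measure.dirac_apply_of_mem]
    · rw [Measure.dirac_apply' _ (measurableSet_singleton _)]
      simp [h]
  have hsnd : ∀ i, (ζ i).map Prod.snd = ν i := by
    intro i
    refine meas_eq_of_le_of_univ (hζ i).2.2 (by rw [hνuniv]; exact ENNReal.ofReal_ne_top) ?_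
    rw [Measure.map_apply measurable_snd MeasurableSet.univ, preimage_univ, (hζ i).1,
      hνuniv]
    simp only [measure_univ, hνuniv]
    exact min_eq_right (by simpa using ENNReal.ofReal_le_one.mpr hm1)
  -- decomposition of ζ i according to the atom hit by the second coordinate
  set ζ' : ∀ i, Fin N → Measure (X i × X i) := fun i k =>
    ((cnt i k : ℝ≥0∞))⁻¹ • (ζ i).restrict (univ ×ˢ {Y k i}) with hζ'
  have hprodsnd : ∀ i (k : Fin N), (univ ×ˢ {Y k i} : Set (X i × X i)) = Prod.snd ⁻¹' {Y k i} := by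
    intro i k
    ext z
    simp only [Set.mem_prod, mem_univ, true_and, mem_preimage, mem_singleton_iff]
  have hrest : ∀ i k, (ζ i) (univ ×ˢ {Y k i}) = c * cnt i k := by
    intro i k
    rw [hprodsnd i k, ← Measure.map_apply measurable_snd (measurableSet_singleton _), hsnd i,
      hνsingle i k]
  have hcnttop : ∀ i k, ((cnt i k : ℝ≥0∞)) ≠ ⊤ := fun i k => ENNReal.natCast_ne_top _
  have hcnt0' : ∀ i k, ((cnt i k : ℝ≥0∞)) ≠ 0 := fun i k => by
    exact_mod_cast hcnt0 i k
  have hζ'univ : ∀ i k, ζ' i k univ = c := by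
    intro i k
    rw [hζ']
    simp only [Measure.smul_apply, Measure.restrict_apply MeasurableSet.univ, univ_inter,
      smul_eq_mul]
    rw [hrest i k, mul_comm c, ← mul_assoc, ENNReal.inv_mul_cancel (hcnt0' i k) (hcnttop i k),
      one_mul]
  have hsumζ' : ∀ i, ∑ k, ζ' i k = ζ i := by
    intro i
    ext s hs
    rw [Measure.finset_sum_apply]
    have hterm : ∀ k, ζ' i k s = ((cnt i k : ℝ≥0∞))⁻¹ * ζ i (s ∩ univ ×ˢ {Y k i}) := by
      intro k
      rw [hζ']
      simp only [Measure.smul_apply, smul_eq_mul, Measure.restrict_apply hs]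
    simp only [hterm]
    set A : Finset (X i) := Finset.univ.image fun k => Y k i with hA
    have hgroup : ∑ k, ((cnt i k : ℝ≥0∞))⁻¹ * ζ i (s ∩ univ ×ˢ {Y k i})
        = ∑ a ∈ A, ζ i (s ∩ univ ×ˢ {a}) := by
      rw [← Finset.sum_fiberwise_of_maps_to (g := fun k => Y k i) (t := A)
        (fun k _ => Finset.mem_image_of_mem _ (Finset.mem_univ k))]
      refine Finset.sum_congr rfl fun a ha => ?_
      obtain ⟨k0, -, hk0⟩ := Finset.mem_image.mp ha
      have hcard0 : ((Finset.univ.filter fun k' => Y k' i = a).card : ℝ≥0∞) ≠ 0 := by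
        rw [ne_eq, Nat.cast_eq_zero, Finset.card_eq_zero, Finset.filter_eq_empty_iff]
        push_neg
        exact ⟨k0, Finset.mem_univ k0, hk0⟩
      have hcard : ∀ k ∈ Finset.univ.filter (fun k' => Y k' i = a),
          ((cnt i k : ℝ≥0∞))⁻¹ * ζ i (s ∩ univ ×ˢ {Y k i})
          = (((Finset.univ.filter fun k' => Y k' i = a).card : ℝ≥0∞))⁻¹
            * ζ i (s ∩ univ ×ˢ {a}) := by
        intro k hk
        have hk' : Y k i = a := (Finset.mem_filter.mp hk).2
        subst hk'
        rfl
      rw [Finset.sum_congr rfl hcard, Finset.sum_const, nsmul_eq_mul, ← mul_assoc,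
        ENNReal.mul_inv_cancel hcard0 (ENNReal.natCast_ne_top _), one_mul]
    rw [hgroup]
    have hdisj : (↑A : Set (X i)).PairwiseDisjoint fun a => s ∩ univ ×ˢ {a} := by
      intro a _ b _ hab
      refine Set.disjoint_left.mpr fun z hza hzb => hab ?_
      have h1 : z.2 = a := hza.2.2
      have h2 : z.2 = b := hzb.2.2
      rw [← h1, h2]
    rw [← measure_biUnion_finset hdisj
      (fun a _ => hs.inter (MeasurableSet.univ.prod (measurableSet_singleton a)))]
    have hU : (⋃ a ∈ A, s ∩ univ ×ˢ {a}) = s ∩ Prod.snd ⁻¹' (↑A : Set (X i)) := by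
      ext z
      simp only [mem_iUnion, mem_inter_iff, Set.mem_prod, mem_univ, true_and,
        mem_singleton_iff, mem_preimage, Finset.mem_coe, exists_prop]
      constructor
      · rintro ⟨a, ha, hz, rfl⟩
        exact ⟨hz, ha⟩
      · rintro ⟨hz, ha⟩
        exact ⟨z.2, ha, hz, rfl⟩
    rw [hU]
    have hnull : ζ i (Prod.snd ⁻¹' (↑A : Set (X i)))ᶜ = 0 := by
      rw [← preimage_compl, ← Measure.map_apply measurable_snd
        (A.measurableSet.compl), hsnd i, hνi i]
      simp only [Measure.smul_apply, Measure.finset_sum_apply, smul_eq_mul]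
      have : ∀ k : Fin N, Measure.dirac (Y k i) (↑A : Set (X i))ᶜ = 0 := by
        intro k
        rw [Measure.dirac_apply' _ A.measurableSet.compl]
        simp only [indicator_apply_eq_zero, mem_compl_iff, Finset.mem_coe]
        intro hk
        exact absurd (Finset.mem_image_of_mem _ (Finset.mem_univ k)) hk
      simp [this]
    exact measure_inter_conull hnull
  set μm : ∀ i, Fin N → Measure (X i) := fun i k => c⁻¹ • (ζ' i k).map Prod.fst with hμm
  have hμmc : ∀ i k, c • μm i k = (ζ' i k).map Prod.fst := by
    intro i k
    rw [hμm]
    show c • c⁻¹ • _ = _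
    rw [smul_smul, ENNReal.mul_inv_cancel hc0 hctop, one_smul]
  have hμmuniv : ∀ i k, μm i k univ = 1 := by
    intro i k
    rw [hμm]
    simp only [Measure.smul_apply, smul_eq_mul]
    rw [Measure.map_apply measurable_fst MeasurableSet.univ, preimage_univ, hζ'univ i k,
      ENNReal.inv_mul_cancel hc0 hctop]
  haveI hprob : ∀ k (i : ι), IsProbabilityMeasure (μm i k) := fun k i => ⟨hμmuniv i k⟩
  set G : Fin N → Measure (∀ i, X i) := fun k => Measure.pi (fun i => μm i k) with hG
  haveI hGprob : ∀ k, IsProbabilityMeasure (G k) := fun k => by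
    haveI := hprob k
    exact MeasureTheory.Measure.pi.instIsProbabilityMeasure (μ := fun i => μm i k)
  have hGuniv : ∀ k, G k univ = 1 := fun k => measure_univ
  have hGi : ∀ (i : ι) k, (G k).map (fun x => x i) = μm i k := by
    intro i k
    rw [hG]
    exact map_eval_pi (fun i' => μm i' k) i
  refine ⟨∑ k, c • G k, ?_, ?_, ?_⟩
  · rw [Measure.finset_sum_apply]
    simp only [Measure.smul_apply, hGuniv, smul_eq_mul, mul_one, Finset.sum_const,
      Finset.card_univ, Fintype.card_fin, nsmul_eq_mul]
    rw [hc, mul_comm, ENNReal.div_mul_cancel (by exact_mod_cast hN.ne') (by simp)]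
  · intro i
    rw [map_finset_sum_meas (measurable_pi_apply i)]
    simp only [Measure.map_smul, hGi]
    have : ∑ k, c • μm i k = (ζ i).map Prod.fst := by
      calc ∑ k, c • μm i k = ∑ k, (ζ' i k).map Prod.fst :=
            Finset.sum_congr rfl fun k _ => hμmc i k
        _ = (∑ k, ζ' i k).map Prod.fst := (map_finset_sum_meas measurable_fst _ _).symm
        _ = (ζ i).map Prod.fst := by rw [hsumζ' i]
    rw [this]
    exact (hζ i).2.1
  · set π : Measure ((∀ i, X i) × (∀ i, X i)) :=
      ∑ k, c • ((G k).prod (Measure.dirac (Y k))) with hπ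
    have hcoup : IsCoupling π (∑ k, c • G k) (empiricalm m Y) := by
      constructor
      · rw [hπ, map_finset_sum_meas measurable_fst]
        simp only [Measure.map_smul, Measure.map_fst_prod, measure_univ, one_smul]
      · rw [hπ, map_finset_sum_meas measurable_snd]
        simp only [Measure.map_smul, Measure.map_snd_prod, hGuniv, one_smul]
        unfold empiricalm
        rw [Finset.smul_sum]
    have hf : Measurable (fun z : (∀ i, X i) × (∀ i, X i) => edist z.1 z.2 ^ p) :=
      measurable_edist.pow_const p
    refine le_trans (iInf_le _ ⟨π, hcoup⟩) ?_
    show ∫⁻ z, edist z.1 z.2 ^ p ∂(∑ k, c • ((G k).prod (Measure.dirac (Y k)))) ≤ _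
    rw [lintegral_finset_sum_measure]
    simp only [lintegral_smul_measure, smul_eq_mul]
    have hcostk : ∀ k, ∫⁻ z, edist z.1 z.2 ^ p ∂((G k).prod (Measure.dirac (Y k)))
        ≤ ∑ i, ∫⁻ t, edist t (Y k i) ^ p ∂(μm i k) := by
      intro k
      rw [Measure.prod_dirac, lintegral_map hf (measurable_id'.prodMk measurable_const)]
      calc ∫⁻ x, edist x (Y k) ^ p ∂(G k)
          ≤ ∫⁻ x, ∑ i, edist (x i) (Y k i) ^ p ∂(G k) :=
            lintegral_mono fun x => edist_rpow_le_sum hp x (Y k)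
        _ = ∑ i, ∫⁻ x, edist (x i) (Y k i) ^ p ∂(G k) :=
            lintegral_finset_sum _ (fun i _ =>
              ((measurable_pi_apply i).edist measurable_const).pow_const p)
        _ = ∑ i, ∫⁻ t, edist t (Y k i) ^ p ∂(μm i k) := by
            refine Finset.sum_congr rfl fun i _ => ?_
            rw [← hGi i k, lintegral_map (measurable_edist_left.pow_const p)
              (measurable_pi_apply i)]
    have hterm2 : ∀ (i : ι) k, c * ∫⁻ t, edist t (Y k i) ^ p ∂(μm i k)
        = ∫⁻ z, edist z.1 z.2 ^ p ∂(ζ' i k) := by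
      intro i k
      rw [← smul_eq_mul, ← lintegral_smul_measure, hμmc i k,
        lintegral_map (measurable_edist_left.pow_const p) measurable_fst]
      rw [hζ']
      simp only [lintegral_smul_measure]
      congr 1
      refine setLIntegral_congr_fun (MeasurableSet.univ.prod (measurableSet_singleton _))
        (fun z hz => ?_)
      have : z.2 = Y k i := hz.2
      rw [this]
    calc ∑ k, c * ∫⁻ z, edist z.1 z.2 ^ p ∂((G k).prod (Measure.dirac (Y k)))
        ≤ ∑ k, c * ∑ i, ∫⁻ t, edist t (Y k i) ^ p ∂(μm i k) :=
          Finset.sum_le_sum fun k _ => mul_le_mul_right (hcostk k) c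
      _ = ∑ k, ∑ i, c * ∫⁻ t, edist t (Y k i) ^ p ∂(μm i k) := by
          simp only [Finset.mul_sum]
      _ = ∑ i, ∑ k, c * ∫⁻ t, edist t (Y k i) ^ p ∂(μm i k) := Finset.sum_comm
      _ = ∑ i, ∑ k, ∫⁻ z, edist z.1 z.2 ^ p ∂(ζ' i k) := by
          simp only [hterm2]
      _ = ∑ i, ∫⁻ z, edist z.1 z.2 ^ p ∂(ζ i) := by
          refine Finset.sum_congr rfl fun i _ => ?_
          rw [← lintegral_finset_sum_measure, hsumζ' i]

end Construction

lemma add_rpow_le_two_rpow (a b : ℝ≥0∞) {p : ℝ} (hp : 0 ≤ p) :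
    (a + b) ^ p ≤ 2 ^ p * (a ^ p + b ^ p) := by
  have h1 : a + b ≤ 2 * max a b := by
    rw [two_mul]
    exact add_le_add (le_max_left a b) (le_max_right a b)
  calc (a + b) ^ p ≤ (2 * max a b) ^ p := ENNReal.rpow_le_rpow h1 hp
    _ = 2 ^ p * (max a b) ^ p := ENNReal.mul_rpow_of_nonneg _ _ hp
    _ ≤ 2 ^ p * (a ^ p + b ^ p) := by
        refine mul_le_mul_right ?_ _
        rcases le_total a b with h | h
        · rw [max_eq_right h]; exact le_add_self
        · rw [max_eq_left h]; exact self_le_add_right _ _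

lemma partial_coupling_exists_finite {Z : Type*} [MeasurableSpace Z] [PseudoMetricSpace Z]
    [OpensMeasurableSpace Z] [SecondCountableTopology Z] [MeasurableSingletonClass Z]
    (p : ℝ) (hp : 0 < p) (ρ : Measure Z) [IsProbabilityMeasure ρ]
    (hmom : FiniteMomentp p ρ)
    (m : ℝ) (hm0 : 0 < m) (hm1 : m ≤ 1) {N : ℕ} (hN : 0 < N) (z : Fin N → Z) :
    ∃ ζ : Measure (Z × Z), IsPartialCoupling ζ ρ (empiricalm m z) ∧
      ∫⁻ w, edist w.1 w.2 ^ p ∂ζ < ⊤ := by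
  obtain ⟨x₀, hint⟩ := hmom
  set ν := empiricalm m z with hνdef
  have hνuniv : ν univ = ENNReal.ofReal m := empiricalm_univ m hN z
  haveI : IsFiniteMeasure ν := ⟨by rw [hνuniv]; exact ENNReal.ofReal_lt_top⟩
  have hFm : Measurable fun x : Z => edist x x₀ ^ p := measurable_edist_left.pow_const p
  have hGm : Measurable fun y : Z => edist x₀ y ^ p := measurable_edist_right.pow_const p
  refine ⟨ρ.prod ν, ⟨?_, ?_, ?_⟩, ?_⟩
  · rw [← Set.univ_prod_univ, Measure.prod_prod, measure_univ, one_mul, hνuniv]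
    exact (min_eq_right (by simpa using ENNReal.ofReal_le_one.mpr hm1)).symm
  · rw [Measure.map_fst_prod]
    intro s
    simp only [Measure.smul_apply, smul_eq_mul]
    calc ν univ * ρ s ≤ 1 * ρ s := by
          refine mul_le_mul_left ?_ _
          rw [hνuniv]
          exact ENNReal.ofReal_le_one.mpr hm1
      _ = ρ s := one_mul _
  · rw [Measure.map_snd_prod, measure_univ, one_smul]
  · have hbound : ∀ w : Z × Z, edist w.1 w.2 ^ p
        ≤ 2 ^ p * (edist w.1 x₀ ^ p + edist x₀ w.2 ^ p) := by
      intro w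
      calc edist w.1 w.2 ^ p ≤ (edist w.1 x₀ + edist x₀ w.2) ^ p :=
            ENNReal.rpow_le_rpow (edist_triangle _ _ _) hp.le
        _ ≤ _ := add_rpow_le_two_rpow _ _ hp.le
    have hA : ∫⁻ x, edist x x₀ ^ p ∂ρ ≠ ⊤ := by
      have heq : ∀ x : Z, edist x x₀ ^ p = ENNReal.ofReal (dist x x₀ ^ p) := by
        intro x
        rw [edist_dist, ← ENNReal.ofReal_rpow_of_nonneg dist_nonneg hp.le]
      simp only [heq]
      rw [lintegral_ofReal_ne_top_iff_integrable hint.1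
        (ae_of_all _ fun x => Real.rpow_nonneg dist_nonneg p)]
      exact hint
    have hB : ∫⁻ y, edist x₀ y ^ p ∂ν ≠ ⊤ := by
      rw [hνdef]
      unfold empiricalm
      rw [lintegral_smul_measure, lintegral_finset_sum_measure, smul_eq_mul]
      refine ENNReal.mul_ne_top ?_ ?_
      · exact (ENNReal.div_lt_top (by simp) (by exact_mod_cast hN.ne')).ne
      · refine (ENNReal.sum_lt_top.mpr fun k _ => ?_).ne
        rw [lintegral_dirac' _ hGm]
        exact (ENNReal.rpow_ne_top_of_nonneg hp.le (edist_ne_top _ _)).lt_top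
    calc ∫⁻ w, edist w.1 w.2 ^ p ∂(ρ.prod ν)
        ≤ ∫⁻ w, 2 ^ p * (edist w.1 x₀ ^ p + edist x₀ w.2 ^ p) ∂(ρ.prod ν) :=
          lintegral_mono hbound
      _ = 2 ^ p * ((∫⁻ w : Z × Z, edist w.1 x₀ ^ p ∂(ρ.prod ν))
            + ∫⁻ w : Z × Z, edist x₀ w.2 ^ p ∂(ρ.prod ν)) := by
          have hF2 : Measurable fun w : Z × Z => edist w.1 x₀ ^ p :=
            (measurable_fst.edist measurable_const).pow_const p
          have hG2 : Measurable fun w : Z × Z => edist x₀ w.2 ^ p :=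
            (measurable_const.edist measurable_snd).pow_const p
          rw [lintegral_const_mul _ (f := fun w : Z × Z => edist w.1 x₀ ^ p + edist x₀ w.2 ^ p) (hF2.add hG2), lintegral_add_left hF2]
      _ < ⊤ := by
          have e1 : ∫⁻ w : Z × Z, edist w.1 x₀ ^ p ∂(ρ.prod ν)
              = ν univ * ∫⁻ x, edist x x₀ ^ p ∂ρ := by
            rw [← lintegral_map hFm measurable_fst, Measure.map_fst_prod,
              lintegral_smul_measure, smul_eq_mul]
          have e2 : ∫⁻ w : Z × Z, edist x₀ w.2 ^ p ∂(ρ.prod ν)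
              = ρ univ * ∫⁻ y, edist x₀ y ^ p ∂ν := by
            rw [← lintegral_map hGm measurable_snd, Measure.map_snd_prod,
              lintegral_smul_measure, smul_eq_mul]
          rw [e1, e2]
          refine ENNReal.mul_lt_top (ENNReal.rpow_lt_top_of_nonneg hp.le (by simp)) ?_
          refine ENNReal.add_lt_top.mpr ⟨?_, ?_⟩
          · exact ENNReal.mul_lt_top (by rw [hνuniv]; exact ENNReal.ofReal_lt_top) hA.lt_top
          · exact ENNReal.mul_lt_top (by simp [measure_univ]) hB.lt_top

lemma singleton_le_of_partial_zero {Z : Type*} [MeasurableSpace Z] [MetricSpace Z]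
    [OpensMeasurableSpace Z] [SecondCountableTopology Z]
    (p : ℝ) (hp : 0 < p) (ρ ν : Measure Z) [IsProbabilityMeasure ρ] [IsFiniteMeasure ν]
    (hνle : ν univ ≤ ρ univ)
    (hzero : (⨅ ζ : {ζ : Measure (Z × Z) // IsPartialCoupling ζ ρ ν},
      ∫⁻ w, edist w.1 w.2 ^ p ∂ζ.1) = 0)
    (a : Z) : ν {a} ≤ ρ {a} := by
  have hball : ∀ r : ℝ, 0 < r → ν {a} ≤ ρ (Metric.ball a r) := by
    intro r hr
    refine ENNReal.le_of_forall_pos_le_add fun ε hε _ => ?_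
    have hrp0 : (ENNReal.ofReal r) ^ p ≠ 0 := by
      simp only [ne_eq, ENNReal.rpow_eq_zero_iff, not_or, not_and_or]
      constructor
      · left; simp [ENNReal.ofReal_eq_zero, not_le, hr]
      · left; exact ENNReal.ofReal_ne_top
    have hrptop : (ENNReal.ofReal r) ^ p ≠ ⊤ :=
      ENNReal.rpow_ne_top_of_nonneg hp.le ENNReal.ofReal_ne_top
    have hpos : (0:ℝ≥0∞) < (ε : ℝ≥0∞) * (ENNReal.ofReal r) ^ p := by
      refine ENNReal.mul_pos ?_ hrp0
      exact_mod_cast hε.ne'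
    obtain ⟨⟨ζ, hζ⟩, hcost⟩ := iInf_lt_iff.mp (hzero ▸ hpos)
    have hsnd : ζ.map Prod.snd = ν := by
      refine meas_eq_of_le_of_univ hζ.2.2 (measure_ne_top ν univ) ?_
      rw [Measure.map_apply measurable_snd MeasurableSet.univ, preimage_univ, hζ.1,
        min_eq_right hνle]
    have h1 : ν {a} = ζ (Prod.snd ⁻¹' {a}) := by
      rw [← hsnd, Measure.map_apply measurable_snd (measurableSet_singleton a)]
    have hsplit : ζ (Prod.snd ⁻¹' {a}) ≤ ζ (Prod.fst ⁻¹' Metric.ball a r)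
        + ζ {w : Z × Z | (ENNReal.ofReal r) ^ p ≤ edist w.1 w.2 ^ p} := by
      refine le_trans (measure_mono ?_) (measure_union_le _ _)
      intro w hw
      have hw2 : w.2 = a := hw
      rcases lt_or_ge (dist w.1 a) r with h | h
      · exact Or.inl (by simpa [Metric.mem_ball] using h)
      · refine Or.inr ?_
        show (ENNReal.ofReal r) ^ p ≤ edist w.1 w.2 ^ p
        refine ENNReal.rpow_le_rpow ?_ hp.le
        rw [hw2, edist_dist]
        exact ENNReal.ofReal_le_ofReal h
    have h2 : ζ (Prod.fst ⁻¹' Metric.ball a r) ≤ ρ (Metric.ball a r) := by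
      rw [← Measure.map_apply measurable_fst measurableSet_ball]
      exact hζ.2.1 _
    have h3 : ζ {w : Z × Z | (ENNReal.ofReal r) ^ p ≤ edist w.1 w.2 ^ p} ≤ ε := by
      have hm := mul_meas_ge_le_lintegral₀ (measurable_edist.pow_const p).aemeasurable
        ((ENNReal.ofReal r) ^ p) (μ := ζ)
      have : (ENNReal.ofReal r) ^ p * ζ {w : Z × Z | (ENNReal.ofReal r) ^ p ≤ edist w.1 w.2 ^ p}
          ≤ (ε : ℝ≥0∞) * (ENNReal.ofReal r) ^ p := le_trans hm hcost.le
      rw [mul_comm (ε : ℝ≥0∞) _] at this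
      exact (ENNReal.mul_le_mul_iff_right hrp0 hrptop).mp this
    calc ν {a} = ζ (Prod.snd ⁻¹' {a}) := h1
      _ ≤ ζ (Prod.fst ⁻¹' Metric.ball a r)
          + ζ {w : Z × Z | (ENNReal.ofReal r) ^ p ≤ edist w.1 w.2 ^ p} := hsplit
      _ ≤ ρ (Metric.ball a r) + ε := add_le_add h2 h3
  have hinter : ⋂ n : ℕ, Metric.ball a (1/(n+1)) = {a} := by
    ext x
    simp only [mem_iInter, Metric.mem_ball, mem_singleton_iff]
    constructor
    · intro hx
      have : dist x a ≤ 0 := by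
        by_contra hc
        push_neg at hc
        obtain ⟨n, hn⟩ := exists_nat_one_div_lt hc
        exact absurd (hx n) (not_lt.mpr hn.le)
      exact dist_le_zero.mp this
    · rintro rfl
      intro n
      simp only [dist_self]
      positivity
  have hanti : Antitone fun n : ℕ => Metric.ball a (1/(n+1)) := by
    intro n1 n2 h
    refine Metric.ball_subset_ball ?_
    apply one_div_le_one_div_of_le
    · positivity
    · exact_mod_cast Nat.succ_le_succ h
  have htend := tendsto_measure_iInter_atTop (μ := ρ)
    (fun n => measurableSet_ball.nullMeasurableSet) hanti ⟨0, measure_ne_top _ _⟩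
  rw [hinter] at htend
  refine ge_of_tendsto htend (Filter.Eventually.of_forall fun n => hball _ (by positivity))

lemma empiricalm_le {Z : Type*} [MeasurableSpace Z] [MeasurableSingletonClass Z]
    (m : ℝ) {N : ℕ} (z : Fin N → Z) (ρ : Measure Z)
    (h : ∀ k, empiricalm m z {z k} ≤ ρ {z k}) : empiricalm m z ≤ ρ := by
  classical
  rw [Measure.le_iff]
  intro s hs
  set A : Finset Z := Finset.univ.image z with hA
  set F : Finset Z := A.filter (· ∈ s) with hF
  have hdirac : ∀ (t : Set Z), MeasurableSet t → (empiricalm m z) t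
      = (ENNReal.ofReal m / N) * ∑ k, Set.indicator t (fun _ => (1:ℝ≥0∞)) (z k) := by
    intro t ht
    unfold empiricalm
    rw [Measure.smul_apply, Measure.finset_sum_apply, smul_eq_mul]
    congr 1
    exact Finset.sum_congr rfl fun k _ => Measure.dirac_apply' _ ht
  have hFs : empiricalm m z s = empiricalm m z ↑F := by
    rw [hdirac s hs, hdirac ↑F F.measurableSet]
    congr 1
    refine Finset.sum_congr rfl fun k _ => ?_
    by_cases hk : z k ∈ s
    · have hkF : z k ∈ (↑F : Set Z) := by
        rw [Finset.mem_coe, hF]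
        exact Finset.mem_filter.mpr ⟨Finset.mem_image_of_mem z (Finset.mem_univ k), hk⟩
      rw [indicator_of_mem hk, indicator_of_mem hkF]
    · have hkF : z k ∉ (↑F : Set Z) := fun hc =>
        hk (Finset.mem_filter.mp (Finset.mem_coe.mp hc)).2
      rw [indicator_of_notMem hk, indicator_of_notMem hkF]
  have hsum : ∀ (μ' : Measure Z), μ' ↑F = ∑ a ∈ F, μ' {a} := by
    intro μ'
    have hcover : (↑F : Set Z) = ⋃ a ∈ F, {a} := by ext x; simp
    rw [hcover, measure_biUnion_finset ?_ (fun a _ => measurableSet_singleton a)]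
    intro a _ b _ hab
    exact Set.disjoint_singleton.mpr hab
  rw [hFs, hsum]
  calc ∑ a ∈ F, empiricalm m z {a} ≤ ∑ a ∈ F, ρ {a} := by
        refine Finset.sum_le_sum fun a ha => ?_
        obtain ⟨k, -, rfl⟩ := Finset.mem_image.mp (Finset.mem_filter.mp ha).1
        exact h k
    _ = ρ ↑F := (hsum ρ).symm
    _ ≤ ρ s := measure_mono fun x hx => (Finset.mem_filter.mp (Finset.mem_coe.mp hx)).2

lemma diag_partial_coupling {Z : Type*} [MeasurableSpace Z] [PseudoEMetricSpace Z]
    [OpensMeasurableSpace Z] [SecondCountableTopology Z]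
    (p : ℝ) (hp : 0 < p) (ρ ν : Measure Z) (hle : ν ≤ ρ) (hmin : ν univ ≤ ρ univ) :
    IsPartialCoupling (ν.map fun t => (t, t)) ρ ν ∧
      ∫⁻ w, edist w.1 w.2 ^ p ∂(ν.map fun t => (t, t)) = 0 := by
  have hdiag : Measurable fun t : Z => (t, t) := measurable_id.prodMk measurable_id
  have hfst : (ν.map fun t : Z => (t, t)).map Prod.fst = ν := by
    rw [Measure.map_map measurable_fst hdiag]
    exact Measure.map_id
  have hsnd : (ν.map fun t : Z => (t, t)).map Prod.snd = ν := by
    rw [Measure.map_map measurable_snd hdiag]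
    exact Measure.map_id
  refine ⟨⟨?_, ?_, ?_⟩, ?_⟩
  · rw [Measure.map_apply hdiag MeasurableSet.univ, preimage_univ, min_eq_right hmin]
  · rw [hfst]; exact hle
  · rw [hsnd]
  · rw [lintegral_map (measurable_edist.pow_const p) hdiag]
    simp only [edist_self, ENNReal.zero_rpow_of_pos hp, lintegral_zero]

lemma Wpmax_rpow {Z : Type*} [MeasurableSpace Z] [PseudoEMetricSpace Z]
    (p : ℝ) (hp : p ≠ 0) (ρ ν : Measure Z) :
    Wpmax p ρ ν ^ p
      = (⨅ ζ : {ζ : Measure (Z × Z) // IsPartialCoupling ζ ρ ν},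
          ∫⁻ w, edist w.1 w.2 ^ p ∂ζ.1).toReal := by
  unfold Wpmax
  rw [ENNReal.toReal_rpow, ← ENNReal.rpow_mul, one_div_mul_cancel hp, ENNReal.rpow_one]

/-- Partial block approximation: there is `C > 0` depending only on
`D` and `p` such that any mass-`m` uniform cloud `mδ_Y` admits `γ ∈ Γ_m(ρ_1,…,ρ_D)`
with `W_p(γ, mδ_Y) ≤ C (Σ_j W_{p,max}(ρ_j, mδ_{Y_j})^p)^{1/p}`. -/
theorem stmt_15 (D : ℕ) (p : ℝ) (hp : 1 ≤ p) :
    ∃ C > (0:ℝ), ∀ (d : Fin D → ℕ)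
      (X : ∀ j : Fin D, Set (EuclideanSpace ℝ (Fin (d j))))
      (ρ : ∀ j : Fin D, Measure (EuclideanSpace ℝ (Fin (d j)))),
      (∀ j, IsProbabilityMeasure (ρ j)) →
      (∀ j, ρ j (X j)ᶜ = 0) →
      (∀ j, FiniteMomentp p (ρ j)) →
      ∀ m ∈ Set.Ioo (0:ℝ) 1,
      ∀ (N : ℕ) (Y : Fin N → (∀ j : Fin D, EuclideanSpace ℝ (Fin (d j)))),
        1 ≤ N → (∀ i, Y i ∈ Set.univ.pi X) →
        ∃ γ : Measure (∀ j : Fin D, EuclideanSpace ℝ (Fin (d j))),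
          CouplPart m ρ γ ∧
          Wp p γ (empiricalm m Y) ≤
            C * (∑ j, Wpmax p (ρ j) ((empiricalm m Y).map (fun x => x j)) ^ p)
              ^ (1 / p) := by
  classical
  refine ⟨2, two_pos, ?_⟩
  intro d X ρ hprob hsupp hmom m hm N Y hN hY
  haveI := hprob
  have hp0 : 0 < p := lt_of_lt_of_le one_pos hp
  have hm0 : 0 < m := hm.1
  have hm1 : m ≤ 1 := hm.2.le
  have hN0 : 0 < N := hN
  set E := fun j : Fin D => EuclideanSpace ℝ (Fin (d j)) with hE
  set ν : ∀ j, Measure (E j) := fun j => (empiricalm m Y).map (fun x => x j) with hν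
  have hνe : ∀ j, ν j = empiricalm m (fun k => Y k j) := fun j =>
    empiricalm_map (measurable_pi_apply j) m Y
  have hνuniv : ∀ j, ν j univ = ENNReal.ofReal m := by
    intro j
    rw [hνe j]
    exact empiricalm_univ m hN0 _
  haveI hνfin : ∀ j, IsFiniteMeasure (ν j) := fun j =>
    ⟨by rw [hνuniv j]; exact ENNReal.ofReal_lt_top⟩
  set I : Fin D → ℝ≥0∞ := fun j =>
    ⨅ ζ : {ζ : Measure (E j × E j) // IsPartialCoupling ζ (ρ j) (ν j)},
      ∫⁻ w, edist w.1 w.2 ^ p ∂ζ.1 with hI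
  have hIfin : ∀ j, I j ≠ ⊤ := by
    intro j
    obtain ⟨ζ, hζ, hfin⟩ := partial_coupling_exists_finite p hp0 (ρ j) (hmom j)
      m hm0 hm1 hN0 (fun k => Y k j)
    rw [← hνe j] at hζ
    exact ((iInf_le _ ⟨ζ, hζ⟩).trans_lt hfin).ne
  have hνle : ∀ j, ν j univ ≤ ρ j univ := by
    intro j
    rw [hνuniv j, measure_univ]
    exact ENNReal.ofReal_le_one.mpr hm1
  -- the right-hand side constant expression
  have hRHS : ∑ j, Wpmax p (ρ j) (ν j) ^ p = (∑ j, I j).toReal := by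
    rw [ENNReal.toReal_sum (fun j _ => hIfin j)]
    exact Finset.sum_congr rfl fun j _ => Wpmax_rpow p hp0.ne' (ρ j) (ν j)
  by_cases hS : ∑ j, I j = 0
  · -- zero case : diagonal couplings
    have hI0 : ∀ j, I j = 0 := by
      intro j
      exact (Finset.sum_eq_zero_iff.mp hS) j (Finset.mem_univ j)
    have hle : ∀ j, ν j ≤ ρ j := by
      intro j
      have hsing : ∀ a, ν j {a} ≤ ρ j {a} := fun a =>
        singleton_le_of_partial_zero p hp0 (ρ j) (ν j) (hνle j) (hI0 j) a
      have := empiricalm_le m (fun k => Y k j) (ρ j)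
        (fun k => by rw [← hνe j]; exact hsing _)
      rwa [← hνe j] at this
    have hdiag := fun j => diag_partial_coupling p hp0 (ρ j) (ν j) (hle j) (hνle j)
    obtain ⟨γ, hγuniv, hγmarg, hγcost⟩ := construction_cost p hp0 ρ m hm0 hm1 hN0 Y
      (fun j => (ν j).map (fun t => (t, t))) (fun j => (hdiag j).1)
    refine ⟨γ, ⟨hγuniv, hγmarg⟩, ?_⟩
    have hzero : (⨅ π : {π : Measure ((∀ j, E j) × (∀ j, E j)) //
        IsCoupling π γ (empiricalm m Y)}, ∫⁻ z, edist z.1 z.2 ^ p ∂π.1) = 0 := by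
      refine le_antisymm (le_trans hγcost ?_) zero_le
      simp only [(fun j => (hdiag j).2)]
      simp
    show ((⨅ π : {π : Measure ((∀ j, E j) × (∀ j, E j)) //
        IsCoupling π γ (empiricalm m Y)}, ∫⁻ z, edist z.1 z.2 ^ p ∂π.1) ^ (1/p)).toReal ≤ _
    rw [hzero, ENNReal.zero_rpow_of_pos (by positivity), ENNReal.toReal_zero]
    have h1 : (0:ℝ) ≤ ∑ j, Wpmax p (ρ j) (ν j) ^ p :=
      Finset.sum_nonneg fun j _ => Real.rpow_nonneg ENNReal.toReal_nonneg p
    positivity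
  · -- main case
    set S := ∑ j, I j with hSdef
    have hStop : S ≠ ⊤ := (ENNReal.sum_lt_top.mpr fun j _ => (hIfin j).lt_top).ne
    have hδ0 : S / D ≠ 0 := by
      simp only [ne_eq, ENNReal.div_eq_zero_iff, not_or]
      exact ⟨hS, by simp⟩
    have hex : ∀ j, ∃ ζ : Measure (E j × E j),
        IsPartialCoupling ζ (ρ j) (ν j) ∧ ∫⁻ w, edist w.1 w.2 ^ p ∂ζ < I j + S / D := by
      intro j
      obtain ⟨⟨ζ, hζ⟩, hc⟩ := iInf_lt_iff.mp (ENNReal.lt_add_right (hIfin j) hδ0)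
      exact ⟨ζ, hζ, hc⟩
    choose ζ hζ hζcost using hex
    obtain ⟨γ, hγuniv, hγmarg, hγcost⟩ := construction_cost p hp0 ρ m hm0 hm1 hN0 Y ζ hζ
    refine ⟨γ, ⟨hγuniv, hγmarg⟩, ?_⟩
    have hsumbound : ∑ j, ∫⁻ w, edist w.1 w.2 ^ p ∂(ζ j) ≤ 2 * S := by
      calc ∑ j, ∫⁻ w, edist w.1 w.2 ^ p ∂(ζ j) ≤ ∑ j, (I j + S / D) :=
            Finset.sum_le_sum fun j _ => (hζcost j).le
        _ = S + ∑ _j : Fin D, S / D := by rw [Finset.sum_add_distrib]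
        _ ≤ S + S := by
            refine add_le_add_right ?_ S
            rw [Finset.sum_const, Finset.card_univ, Fintype.card_fin, nsmul_eq_mul]
            exact ENNReal.mul_div_le
        _ = 2 * S := (two_mul S).symm
    have hinf : (⨅ π : {π : Measure ((∀ j, E j) × (∀ j, E j)) //
        IsCoupling π γ (empiricalm m Y)}, ∫⁻ z, edist z.1 z.2 ^ p ∂π.1) ≤ 2 * S :=
      hγcost.trans hsumbound
    show ((⨅ π : {π : Measure ((∀ j, E j) × (∀ j, E j)) //
        IsCoupling π γ (empiricalm m Y)}, ∫⁻ z, edist z.1 z.2 ^ p ∂π.1) ^ (1/p)).toReal ≤ _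
    rw [hRHS]
    have h2S : (2 * S) ≠ ⊤ := ENNReal.mul_ne_top (by simp) hStop
    calc ((⨅ π : {π : Measure ((∀ j, E j) × (∀ j, E j)) //
          IsCoupling π γ (empiricalm m Y)}, ∫⁻ z, edist z.1 z.2 ^ p ∂π.1) ^ (1/p)).toReal
        ≤ ((2 * S) ^ (1/p)).toReal := by
          refine ENNReal.toReal_mono (ENNReal.rpow_ne_top_of_nonneg (by positivity) h2S) ?_
          exact ENNReal.rpow_le_rpow hinf (by positivity)
      _ = ((2:ℝ≥0∞) ^ (1/p)).toReal * (S ^ (1/p)).toReal := by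
          rw [ENNReal.mul_rpow_of_nonneg _ _ (by positivity), ENNReal.toReal_mul]
      _ ≤ 2 * (S ^ (1/p)).toReal := by
          refine mul_le_mul_of_nonneg_right ?_ ENNReal.toReal_nonneg
          have h1 : (2:ℝ≥0∞) ^ (1/p) ≤ (2:ℝ≥0∞) ^ (1:ℝ) := by
            refine ENNReal.rpow_le_rpow_of_exponent_le (by norm_num) ?_
            rw [div_le_one hp0]
            exact hp
          have h2 : ((2:ℝ≥0∞) ^ (1:ℝ)).toReal = 2 := by
            rw [ENNReal.rpow_one]
            rfl
          calc ((2:ℝ≥0∞) ^ (1/p)).toReal ≤ ((2:ℝ≥0∞) ^ (1:ℝ)).toReal :=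
                ENNReal.toReal_mono (by rw [ENNReal.rpow_one]; exact ENNReal.ofNat_ne_top) h1
            _ = 2 := h2
      _ = 2 * (S.toReal) ^ (1/p) := by rw [ENNReal.toReal_rpow]
end
end
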